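/- arXiv:1512.03039 — 4 statements merged into one kernel-verified Lean document; each statement's English description precedes it below -/
import Mathlib

section
/- Let D be a covariant exterior derivative with curvature F and covariant Lie derivative L^A_X = L_X + ι_X A. Then for any vector fields X, Y and V-valued k-form v: [L^A_X, L^A_Y] v = L^A_{[X,Y]} v + (ι_Y ι_X F) v. -/
noncomputable section

/-- Minkowski space `ℝ^{1+2}`, in rectilinear coordinates. -/
abbrev Spacetime : Type := Fin 3 → ℝ

/-- Diagonal entries of the Minkowski metric `diag(-1,+1,+1)` (which coincide with
those of its inverse). -/
def eta (μ : Fin 3) : ℝ := if μ = 0 then -1 else 1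

/-- The Levi-Civita symbol (components of the volume form `ε = dx⁰∧dx¹∧dx²`):
the sign of `f` as a permutation, and `0` if `f` is not bijective. -/
def eps {n : ℕ} (f : Fin n → Fin n) : ℝ :=
  if h : Function.Bijective f then ((Equiv.Perm.sign (Equiv.ofBijective f h) : ℤ) : ℝ)
  else 0

/-- A `W`-valued differential `k`-form on `ℝ^{1+2}`, given by its components
`v x (μ₁, …, μ_k) = v_x(∂_{μ₁}, …, ∂_{μ_k})`. -/
abbrev Form (W : Type*) (k : ℕ) : Type _ := Spacetime → (Fin k → Fin 3) → W

/-- The components of a form are totally antisymmetric. -/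
def IsAlt {W : Type*} [AddCommGroup W] [Module ℝ W] {k : ℕ} (v : Form W k) : Prop :=
  ∀ (x : Spacetime) (w : Fin k → Fin 3) (σ : Equiv.Perm (Fin k)),
    v x (w ∘ σ) = ((Equiv.Perm.sign σ : ℤ) : ℝ) • v x w

/-- The Hodge star operator of the Minkowski metric `diag(-1,+1,+1)` and the volume
form `ε = dx⁰∧dx¹∧dx²` (characterized by `ω¹ ∧ ⋆ω² = η⁻¹(ω¹, ω²) ε`), in components:
`(⋆v)_{μ_{k+1}…μ₃} = (1/k!) v^{ν₁…ν_k} ε_{ν₁…ν_k μ_{k+1}…μ₃}`. -/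
def hodge {W : Type*} [AddCommGroup W] [Module ℝ W] (k : ℕ) (hk : k ≤ 3) (v : Form W k) :
    Form W (3 - k) := fun x μ =>
  (Nat.factorial k : ℝ)⁻¹ •
    ∑ ν : Fin k → Fin 3,
      ((∏ i, eta (ν i)) * eps (Fin.append ν μ ∘ Fin.cast (by omega : 3 = k + (3 - k)))) •
        v x ν

/-- The exterior derivative, in components. -/
def extd {W : Type*} [NormedAddCommGroup W] [NormedSpace ℝ W] {k : ℕ} (v : Form W k) :
    Form W (k + 1) := fun x w =>
  ∑ i : Fin (k + 1),
    ((-1 : ℝ) ^ (i : ℕ)) • fderiv ℝ (fun y => v y (w ∘ i.succAbove)) x (Pi.single (w i) 1)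

/-- Interior product `ι_X` with a vector field `X` (contraction in the left-most
slot). -/
def iprod {W : Type*} [AddCommGroup W] [Module ℝ W] {k : ℕ}
    (X : Spacetime → Fin 3 → ℝ) (v : Form W (k + 1)) : Form W k := fun x w =>
  ∑ μ : Fin 3, X x μ • v x (Fin.cons μ w)

/-- Lie derivative of a `W`-valued `k`-form along a vector field `X`, in components:
`(L_X v)_{μ₁…μ_k} = X^ν ∂_ν v_{μ₁…μ_k} + Σ_i (∂_{μ_i} X^ν) v_{μ₁…ν…μ_k}`. -/
def lieD {W : Type*} [NormedAddCommGroup W] [NormedSpace ℝ W] {k : ℕ}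
    (X : Spacetime → Fin 3 → ℝ) (v : Form W k) : Form W k := fun x w =>
  (∑ ν : Fin 3, X x ν • fderiv ℝ (fun y => v y w) x (Pi.single ν 1)) +
    ∑ i : Fin k, ∑ ν : Fin 3,
      fderiv ℝ (fun y => X y ν) x (Pi.single (w i) 1) • v x (Function.update w i ν)

/-- The metric dual 1-form `X^♭` of a vector field `X`. -/
def flat (X : Spacetime → Fin 3 → ℝ) : Form ℝ 1 := fun x w => eta (w 0) * X x (w 0)

/-- Wedge product of a `W`-valued `k`-form with a real-valued 1-form. -/
def wedgeR {W : Type*} [AddCommGroup W] [Module ℝ W] {k : ℕ}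
    (v : Form W k) (α : Form ℝ 1) : Form W (k + 1) := fun x w =>
  ∑ i : Fin (k + 1), ((-1 : ℝ) ^ (k + (i : ℕ)) * α x ![w i]) • v x (w ∘ i.succAbove)

/-- `X` is a Killing vector field of the Minkowski metric:
`∂_a X_b + ∂_b X_a = 0` where `X_b = η_{bb} X^b`. -/
def IsKilling (X : Spacetime → Fin 3 → ℝ) : Prop :=
  ∀ (x : Spacetime) (a b : Fin 3),
    eta b * fderiv ℝ (fun y => X y b) x (Pi.single a 1) +
      eta a * fderiv ℝ (fun y => X y a) x (Pi.single b 1) = 0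

section Covariant

variable {V : Type*} [NormedAddCommGroup V] [NormedSpace ℂ V]

/-- Wedge product `a ∧ v` of an `End(V)`-valued 1-form `a` with a `V`-valued `k`-form
`v`, defined via the action on `V`. -/
def wedgeA {k : ℕ} (a : Form (V →L[ℂ] V) 1) (v : Form V k) : Form V (k + 1) :=
  fun x w =>
    ∑ i : Fin (k + 1), ((-1 : ℝ) ^ (i : ℕ)) • (a x ![w i]) (v x (w ∘ i.succAbove))

/-- The covariant exterior derivative `D v = d v + A ∧ v` associated to the connection
1-form `A` (taking values in operators on `V`). -/
def covD {k : ℕ} (A : Form (V →L[ℂ] V) 1) (v : Form V k) : Form V (k + 1) :=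
  fun x w => extd v x w + wedgeA A v x w

/-- The curvature 2-form `F = dA + (1/2)[A ∧ A]` of the connection 1-form `A`, acting
on `V`: `F_{μν} = ∂_μ A_ν - ∂_ν A_μ + [A_μ, A_ν]`. -/
def curv (A : Form (V →L[ℂ] V) 1) : Form (V →L[ℂ] V) 2 := fun x w =>
  fderiv ℝ (fun y => A y ![w 1]) x (Pi.single (w 0) 1)
    - fderiv ℝ (fun y => A y ![w 0]) x (Pi.single (w 1) 1)
    + ((A x ![w 0]).comp (A x ![w 1]) - (A x ![w 1]).comp (A x ![w 0]))

/-- Wedge product of an `End(V)`-valued 2-form with a `V`-valued `k`-form. -/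
def wedgeF {k : ℕ} (F : Form (V →L[ℂ] V) 2) (v : Form V k) : Form V (k + 2) :=
  fun x w =>
    ((2 * Nat.factorial k : ℝ))⁻¹ •
      ∑ σ : Equiv.Perm (Fin (k + 2)),
        ((Equiv.Perm.sign σ : ℤ) : ℝ) •
          (F x ![w (σ ⟨0, by omega⟩), w (σ ⟨1, by omega⟩)])
            (v x fun j : Fin k => w (σ ⟨(j : ℕ) + 2, by omega⟩))

/-- The covariant Lie derivative `L^A_X v = L_X v + (ι_X A) · v`. -/
def covLie {k : ℕ} (A : Form (V →L[ℂ] V) 1) (X : Spacetime → Fin 3 → ℝ)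
    (v : Form V k) : Form V k := fun x w =>
  lieD X v x w + (∑ μ : Fin 3, X x μ • A x ![μ]) (v x w)

/-- The Lie bracket `[X, Y]` of vector fields. -/
def vbracket (X Y : Spacetime → Fin 3 → ℝ) : Spacetime → Fin 3 → ℝ := fun x μ =>
  ∑ ν : Fin 3, (X x ν * fderiv ℝ (fun y => Y y μ) x (Pi.single ν 1)
    - Y x ν * fderiv ℝ (fun y => X y μ) x (Pi.single ν 1))

/-- The covariant derivative `D_μ ψ = ∂_μ ψ + A_μ ψ` of a `V`-valued function. -/
def covd1 (A : Form (V →L[ℂ] V) 1) (μ : Fin 3) (ψ : Spacetime → V) : Spacetime → V :=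
  fun x => fderiv ℝ ψ x (Pi.single μ 1) + (A x ![μ]) (ψ x)

/-- The covariant d'Alembertian `□_A ψ = D^μ D_μ ψ` of a `V`-valued function. -/
def boxA (A : Form (V →L[ℂ] V) 1) (ψ : Spacetime → V) : Spacetime → V := fun x =>
  ∑ μ : Fin 3, eta μ • covd1 A μ (covd1 A μ ψ) x

/-- The covariant derivative `D_Z ψ = ∂_Z ψ + A(Z) ψ` of a `V`-valued function along a
vector field `Z`. -/
def covDvec (A : Form (V →L[ℂ] V) 1) (Z : Spacetime → Fin 3 → ℝ)
    (ψ : Spacetime → V) : Spacetime → V := fun x =>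
  fderiv ℝ ψ x (Z x) + (∑ μ : Fin 3, Z x μ • A x ![μ]) (ψ x)

/-- Wedge product of a `V`-valued 1-form with a real-valued 2-form. -/
def wedge12 (v : Form V 1) (ω : Form ℝ 2) : Form V 3 := fun x w =>
  (2 : ℝ)⁻¹ •
    ∑ σ : Equiv.Perm (Fin 3),
      (((Equiv.Perm.sign σ : ℤ) : ℝ) * ω x ![w (σ 1), w (σ 2)]) • v x ![w (σ 0)]

end Covariant
section Helpers
variable {W : Type*} [NormedAddCommGroup W] [NormedSpace ℝ W]

lemma smooth_pd {f : Spacetime → W} (hf : ContDiff ℝ (⊤ : ℕ∞) f) (b : Fin 3) :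
    ContDiff ℝ (⊤ : ℕ∞) (fun y => fderiv ℝ f y (Pi.single b 1)) :=
  (hf.fderiv_right (le_refl _)).clm_apply contDiff_const

lemma diffAt_of_smooth {f : Spacetime → W} (hf : ContDiff ℝ (⊤ : ℕ∞) f) (x : Spacetime) :
    DifferentiableAt ℝ f x :=
  (hf.differentiable (by simp)).differentiableAt

lemma pd_comm {f : Spacetime → W} (hf : ContDiff ℝ (⊤ : ℕ∞) f) (a b : Fin 3) (x : Spacetime) :
    fderiv ℝ (fun y => fderiv ℝ f y (Pi.single b 1)) x (Pi.single a 1)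
      = fderiv ℝ (fun y => fderiv ℝ f y (Pi.single a 1)) x (Pi.single b 1) := by
  have hsym : IsSymmSndFDerivAt ℝ f x :=
    (hf.contDiffAt).isSymmSndFDerivAt ((by rw [minSmoothness_of_isRCLikeNormedField]; exact WithTop.coe_le_coe.mpr (le_top : (2 : ℕ∞) ≤ ⊤)))
  have hd : DifferentiableAt ℝ (fderiv ℝ f) x :=
    diffAt_of_smooth (hf.fderiv_right (le_refl _)) x
  have h1 : ∀ u s : Fin 3 → ℝ, fderiv ℝ (fun y => fderiv ℝ f y u) x s
      = fderiv ℝ (fderiv ℝ f) x s u := by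
    intro u s
    rw [show (fun y => fderiv ℝ f y u) = fun y => (fderiv ℝ f y) u from rfl,
      fderiv_clm_apply hd (differentiableAt_const u)]
    simp
  rw [h1, h1]
  exact hsym _ _

end Helpers
section Helpers2
variable {W : Type*} [NormedAddCommGroup W] [NormedSpace ℝ W] {k : ℕ}

lemma smooth_lieD (Z : Spacetime → Fin 3 → ℝ) (hZ : ∀ μ, ContDiff ℝ (⊤ : ℕ∞) fun y => Z y μ)
    (v : Form W k) (hv : ∀ w, ContDiff ℝ (⊤ : ℕ∞) fun y => v y w) (w : Fin k → Fin 3) :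
    ContDiff ℝ (⊤ : ℕ∞) (fun y => lieD Z v y w) := by
  unfold lieD
  exact ContDiff.add
    (ContDiff.sum fun ν _ => (hZ ν).smul (smooth_pd (hv w) ν))
    (ContDiff.sum fun i _ => ContDiff.sum fun ν _ => (smooth_pd (hZ ν) (w i)).smul (hv _))

lemma fderiv_lieD_apply (Z : Spacetime → Fin 3 → ℝ) (hZ : ∀ μ, ContDiff ℝ (⊤ : ℕ∞) fun y => Z y μ)
    (v : Form W k) (hv : ∀ w, ContDiff ℝ (⊤ : ℕ∞) fun y => v y w) (x : Spacetime)
    (w : Fin k → Fin 3) (s : Fin 3 → ℝ) :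
    fderiv ℝ (fun y => lieD Z v y w) x s =
      (∑ ν : Fin 3,
        (Z x ν • fderiv ℝ (fun y => fderiv ℝ (fun y' => v y' w) y (Pi.single ν 1)) x s
          + fderiv ℝ (fun y => Z y ν) x s • fderiv ℝ (fun y => v y w) x (Pi.single ν 1)))
      + ∑ i : Fin k, ∑ ν : Fin 3,
          (fderiv ℝ (fun y => Z y ν) x (Pi.single (w i) 1)
              • fderiv ℝ (fun y => v y (Function.update w i ν)) x s
            + fderiv ℝ (fun y => fderiv ℝ (fun y' => Z y' ν) y (Pi.single (w i) 1)) x s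
              • v x (Function.update w i ν)) := by
  have dZ : ∀ ν x, DifferentiableAt ℝ (fun y => Z y ν) x := fun ν x => diffAt_of_smooth (hZ ν) x
  have dv : ∀ w x, DifferentiableAt ℝ (fun y => v y w) x := fun w x => diffAt_of_smooth (hv w) x
  have dpv : ∀ w ν x, DifferentiableAt ℝ (fun y => fderiv ℝ (fun y' => v y' w) y (Pi.single ν 1)) x :=
    fun w ν x => diffAt_of_smooth (smooth_pd (hv w) ν) x
  have dpZ : ∀ ν a x, DifferentiableAt ℝ (fun y => fderiv ℝ (fun y' => Z y' ν) y (Pi.single a 1)) x :=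
    fun ν a x => diffAt_of_smooth (smooth_pd (hZ ν) a) x
  have e : (fun y => lieD Z v y w) = (fun y =>
      (∑ ν : Fin 3, Z y ν • fderiv ℝ (fun y' => v y' w) y (Pi.single ν 1)) +
      ∑ i : Fin k, ∑ ν : Fin 3,
        fderiv ℝ (fun y' => Z y' ν) y (Pi.single (w i) 1) • v y (Function.update w i ν)) := rfl
  rw [e, fderiv_fun_add
      (DifferentiableAt.fun_sum fun ν _ => (dZ ν x).fun_smul (dpv w ν x))
      (DifferentiableAt.fun_sum fun i _ => DifferentiableAt.fun_sum fun ν _ =>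
        (dpZ ν (w i) x).fun_smul (dv _ x)),
    fderiv_fun_sum (fun ν _ => (dZ ν x).fun_smul (dpv w ν x)),
    fderiv_fun_sum (fun i _ => DifferentiableAt.fun_sum fun ν _ => (dpZ ν (w i) x).fun_smul (dv _ x))]
  simp only [ContinuousLinearMap.add_apply, ContinuousLinearMap.coe_sum', Finset.sum_apply]
  congr 1
  · refine Finset.sum_congr rfl fun ν _ => ?_
    rw [fderiv_fun_smul (dZ ν x) (dpv w ν x)]
    simp
  · refine Finset.sum_congr rfl fun i _ => ?_
    rw [fderiv_fun_sum (fun ν _ => (dpZ ν (w i) x).fun_smul (dv _ x))]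
    simp only [ContinuousLinearMap.coe_sum', Finset.sum_apply]
    refine Finset.sum_congr rfl fun ν _ => ?_
    rw [fderiv_fun_smul (dpZ ν (w i) x) (dv _ x)]
    simp

end Helpers2
section Helpers3
variable {W : Type*} [NormedAddCommGroup W] [NormedSpace ℝ W] {k : ℕ}

lemma lieD_add_pt (Z : Spacetime → Fin 3 → ℝ) (u1 u2 : Form W k) (x : Spacetime)
    (h1 : ∀ w, DifferentiableAt ℝ (fun y => u1 y w) x)
    (h2 : ∀ w, DifferentiableAt ℝ (fun y => u2 y w) x) (w : Fin k → Fin 3) :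
    lieD Z (fun y w' => u1 y w' + u2 y w') x w = lieD Z u1 x w + lieD Z u2 x w := by
  simp only [lieD]
  have e : ∀ w', fderiv ℝ (fun y => u1 y w' + u2 y w') x
      = fderiv ℝ (fun y => u1 y w') x + fderiv ℝ (fun y => u2 y w') x :=
    fun w' => fderiv_add (h1 w') (h2 w')
  simp only [e, ContinuousLinearMap.add_apply, smul_add, Finset.sum_add_distrib]
  abel

lemma lieD_clm_pt (Z : Spacetime → Fin 3 → ℝ) (c : Spacetime → W →L[ℝ] W)
    (u : Form W k) (x : Spacetime)
    (hc : DifferentiableAt ℝ c x)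
    (hu : ∀ w, DifferentiableAt ℝ (fun y => u y w) x) (w : Fin k → Fin 3) :
    lieD Z (fun y w' => c y (u y w')) x w =
      (∑ ν : Fin 3, Z x ν • (fderiv ℝ c x (Pi.single ν 1)) (u x w)) + c x (lieD Z u x w) := by
  simp only [lieD]
  have e : ∀ w', fderiv ℝ (fun y => c y (u y w')) x
      = (c x).comp (fderiv ℝ (fun y => u y w') x) + (fderiv ℝ c x).flip (u x w') :=
    fun w' => fderiv_clm_apply hc (hu w')
  simp only [e, ContinuousLinearMap.add_apply, ContinuousLinearMap.comp_apply,
    ContinuousLinearMap.flip_apply, map_add, map_sum, ContinuousLinearMap.map_smul_of_tower,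
    smul_add, Finset.sum_add_distrib]
  abel

end Helpers3

section Helpers4
variable {X Y : Spacetime → Fin 3 → ℝ}

lemma fderiv_vbracket_apply (hX : ∀ μ, ContDiff ℝ (⊤ : ℕ∞) fun y => X y μ)
    (hY : ∀ μ, ContDiff ℝ (⊤ : ℕ∞) fun y => Y y μ) (x : Spacetime) (μ : Fin 3) (s : Fin 3 → ℝ) :
    fderiv ℝ (fun y => vbracket X Y y μ) x s =
      ∑ ν : Fin 3,
        ((X x ν * fderiv ℝ (fun y => fderiv ℝ (fun y' => Y y' μ) y (Pi.single ν 1)) x s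
            + fderiv ℝ (fun y => Y y μ) x (Pi.single ν 1) * fderiv ℝ (fun y => X y ν) x s)
          - (Y x ν * fderiv ℝ (fun y => fderiv ℝ (fun y' => X y' μ) y (Pi.single ν 1)) x s
            + fderiv ℝ (fun y => X y μ) x (Pi.single ν 1) * fderiv ℝ (fun y => Y y ν) x s)) := by
  have dX : ∀ ν x, DifferentiableAt ℝ (fun y => X y ν) x := fun ν x => diffAt_of_smooth (hX ν) x
  have dY : ∀ ν x, DifferentiableAt ℝ (fun y => Y y ν) x := fun ν x => diffAt_of_smooth (hY ν) x
  have dpX : ∀ μ ν x, DifferentiableAt ℝ (fun y => fderiv ℝ (fun y' => X y' μ) y (Pi.single ν 1)) x :=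
    fun μ ν x => diffAt_of_smooth (smooth_pd (hX μ) ν) x
  have dpY : ∀ μ ν x, DifferentiableAt ℝ (fun y => fderiv ℝ (fun y' => Y y' μ) y (Pi.single ν 1)) x :=
    fun μ ν x => diffAt_of_smooth (smooth_pd (hY μ) ν) x
  have e : (fun y => vbracket X Y y μ) = (fun y => ∑ ν : Fin 3,
      (X y ν * fderiv ℝ (fun y' => Y y' μ) y (Pi.single ν 1)
        - Y y ν * fderiv ℝ (fun y' => X y' μ) y (Pi.single ν 1))) := rfl
  rw [e, fderiv_fun_sum (fun ν _ => ((dX ν x).fun_mul (dpY μ ν x)).fun_sub ((dY ν x).fun_mul (dpX μ ν x)))]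
  simp only [ContinuousLinearMap.coe_sum', Finset.sum_apply]
  refine Finset.sum_congr rfl fun ν _ => ?_
  rw [fderiv_fun_sub ((dX ν x).fun_mul (dpY μ ν x)) ((dY ν x).fun_mul (dpX μ ν x)),
    fderiv_fun_mul (dX ν x) (dpY μ ν x), fderiv_fun_mul (dY ν x) (dpX μ ν x)]
  simp [mul_comm]

end Helpers4
section Helpers5
variable {W : Type*} [NormedAddCommGroup W] [NormedSpace ℝ W] {k : ℕ}

/-- Full expansion of `lieD X (lieD Y v)` at a point. -/
lemma lieD_lieD_expand (X Y : Spacetime → Fin 3 → ℝ)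
    (hX : ∀ μ, ContDiff ℝ (⊤ : ℕ∞) fun y => X y μ) (hY : ∀ μ, ContDiff ℝ (⊤ : ℕ∞) fun y => Y y μ)
    (v : Form W k) (hv : ∀ w, ContDiff ℝ (⊤ : ℕ∞) fun y => v y w)
    (x : Spacetime) (w : Fin k → Fin 3) :
    lieD X (lieD Y v) x w =
      (∑ μ : Fin 3, ∑ ν : Fin 3, (X x μ * Y x ν) •
        fderiv ℝ (fun y => fderiv ℝ (fun y' => v y' w) y (Pi.single ν 1)) x (Pi.single μ 1))
      + (∑ μ : Fin 3, ∑ ν : Fin 3,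
          (X x μ * fderiv ℝ (fun y => Y y ν) x (Pi.single μ 1)) •
            fderiv ℝ (fun y => v y w) x (Pi.single ν 1))
      + (∑ μ : Fin 3, ∑ i : Fin k, ∑ ν : Fin 3,
          (X x μ * fderiv ℝ (fun y => Y y ν) x (Pi.single (w i) 1)) •
            fderiv ℝ (fun y => v y (Function.update w i ν)) x (Pi.single μ 1))
      + (∑ μ : Fin 3, ∑ i : Fin k, ∑ ν : Fin 3,
          (X x μ * fderiv ℝ (fun y => fderiv ℝ (fun y' => Y y' ν) y (Pi.single (w i) 1)) x
              (Pi.single μ 1)) • v x (Function.update w i ν))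
      + (∑ i : Fin k, ∑ μ : Fin 3, ∑ ν : Fin 3,
          (fderiv ℝ (fun y => X y μ) x (Pi.single (w i) 1) * Y x ν) •
            fderiv ℝ (fun y => v y (Function.update w i μ)) x (Pi.single ν 1))
      + (∑ i : Fin k, ∑ μ : Fin 3, ∑ j : Fin k, ∑ ν : Fin 3,
          (fderiv ℝ (fun y => X y μ) x (Pi.single (w i) 1)
              * fderiv ℝ (fun y => Y y ν) x (Pi.single (Function.update w i μ j) 1)) •
            v x (Function.update (Function.update w i μ) j ν)) := by
  have h0 : lieD X (lieD Y v) x w =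
      ∑ μ : Fin 3, X x μ • fderiv ℝ (fun y => lieD Y v y w) x (Pi.single μ 1)
      + ∑ i : Fin k, ∑ μ : Fin 3,
          fderiv ℝ (fun y => X y μ) x (Pi.single (w i) 1) • lieD Y v x (Function.update w i μ) := rfl
  rw [h0]
  simp only [fderiv_lieD_apply Y hY v hv x w]
  simp only [lieD]
  simp only [smul_add, Finset.smul_sum, smul_smul, Finset.sum_add_distrib]
  abel

end Helpers5
section Helpers6
variable {W : Type*} [NormedAddCommGroup W] [NormedSpace ℝ W] {k : ℕ}

lemma lieD_vbracket_expand (X Y : Spacetime → Fin 3 → ℝ)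
    (hX : ∀ μ, ContDiff ℝ (⊤ : ℕ∞) fun y => X y μ) (hY : ∀ μ, ContDiff ℝ (⊤ : ℕ∞) fun y => Y y μ)
    (v : Form W k) (x : Spacetime) (w : Fin k → Fin 3) :
    lieD (vbracket X Y) v x w =
      ((∑ μ : Fin 3, ∑ ν : Fin 3,
          (X x μ * fderiv ℝ (fun y => Y y ν) x (Pi.single μ 1)) •
            fderiv ℝ (fun y => v y w) x (Pi.single ν 1))
        - ∑ μ : Fin 3, ∑ ν : Fin 3,
          (Y x μ * fderiv ℝ (fun y => X y ν) x (Pi.single μ 1)) •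
            fderiv ℝ (fun y => v y w) x (Pi.single ν 1))
      + (((∑ μ : Fin 3, ∑ i : Fin k, ∑ ν : Fin 3,
          (X x μ * fderiv ℝ (fun y => fderiv ℝ (fun y' => Y y' ν) y (Pi.single (w i) 1)) x
            (Pi.single μ 1)) • v x (Function.update w i ν))
        - ∑ μ : Fin 3, ∑ i : Fin k, ∑ ν : Fin 3,
          (Y x μ * fderiv ℝ (fun y => fderiv ℝ (fun y' => X y' ν) y (Pi.single (w i) 1)) x
            (Pi.single μ 1)) • v x (Function.update w i ν))
      + ((∑ i : Fin k, ∑ μ : Fin 3, ∑ ν : Fin 3,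
          (fderiv ℝ (fun y => X y μ) x (Pi.single (w i) 1)
            * fderiv ℝ (fun y => Y y ν) x (Pi.single μ 1)) • v x (Function.update w i ν))
        - ∑ i : Fin k, ∑ μ : Fin 3, ∑ ν : Fin 3,
          (fderiv ℝ (fun y => Y y μ) x (Pi.single (w i) 1)
            * fderiv ℝ (fun y => X y ν) x (Pi.single μ 1)) • v x (Function.update w i ν))) := by
  have e1 : lieD (vbracket X Y) v x w =
      (∑ ν : Fin 3, (∑ μ : Fin 3,
          (X x μ * fderiv ℝ (fun y => Y y ν) x (Pi.single μ 1)
            - Y x μ * fderiv ℝ (fun y => X y ν) x (Pi.single μ 1))) •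
        fderiv ℝ (fun y => v y w) x (Pi.single ν 1))
      + ∑ i : Fin k, ∑ ν : Fin 3,
          fderiv ℝ (fun y => vbracket X Y y ν) x (Pi.single (w i) 1) •
            v x (Function.update w i ν) := rfl
  rw [e1]
  congr 1
  · -- first group
    simp only [Finset.sum_smul, sub_smul, Finset.sum_sub_distrib]
    congr 1 <;> exact Finset.sum_comm
  · -- second group
    have key : ∀ (i : Fin k) (ν : Fin 3),
        fderiv ℝ (fun y => vbracket X Y y ν) x (Pi.single (w i) 1) • v x (Function.update w i ν)
        = ∑ μ : Fin 3,
            ((X x μ * fderiv ℝ (fun y => fderiv ℝ (fun y' => Y y' ν) y (Pi.single (w i) 1)) x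
                (Pi.single μ 1)) • v x (Function.update w i ν)
            + (fderiv ℝ (fun y => X y μ) x (Pi.single (w i) 1)
                * fderiv ℝ (fun y => Y y ν) x (Pi.single μ 1)) • v x (Function.update w i ν)
            - ((Y x μ * fderiv ℝ (fun y => fderiv ℝ (fun y' => X y' ν) y (Pi.single (w i) 1)) x
                (Pi.single μ 1)) • v x (Function.update w i ν)
            + (fderiv ℝ (fun y => Y y μ) x (Pi.single (w i) 1)
                * fderiv ℝ (fun y => X y ν) x (Pi.single μ 1)) • v x (Function.update w i ν))) := by
      intro i ν
      rw [fderiv_vbracket_apply hX hY, Finset.sum_smul]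
      refine Finset.sum_congr rfl fun μ _ => ?_
      rw [pd_comm (hY ν) (w i) μ x, pd_comm (hX ν) (w i) μ x,
        mul_comm (fderiv ℝ (fun y => Y y ν) x (Pi.single μ 1)),
        mul_comm (fderiv ℝ (fun y => X y ν) x (Pi.single μ 1)),
        sub_smul, add_smul, add_smul]
    have hA : (∑ i : Fin k, ∑ ν : Fin 3, ∑ μ : Fin 3,
          (X x μ * fderiv ℝ (fun y => fderiv ℝ (fun y' => Y y' ν) y (Pi.single (w i) 1)) x
            (Pi.single μ 1)) • v x (Function.update w i ν))
        = ∑ μ : Fin 3, ∑ i : Fin k, ∑ ν : Fin 3,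
          (X x μ * fderiv ℝ (fun y => fderiv ℝ (fun y' => Y y' ν) y (Pi.single (w i) 1)) x
            (Pi.single μ 1)) • v x (Function.update w i ν) :=
      (Finset.sum_congr rfl fun i _ => Finset.sum_comm).trans Finset.sum_comm
    have hC : (∑ i : Fin k, ∑ ν : Fin 3, ∑ μ : Fin 3,
          (Y x μ * fderiv ℝ (fun y => fderiv ℝ (fun y' => X y' ν) y (Pi.single (w i) 1)) x
            (Pi.single μ 1)) • v x (Function.update w i ν))
        = ∑ μ : Fin 3, ∑ i : Fin k, ∑ ν : Fin 3,
          (Y x μ * fderiv ℝ (fun y => fderiv ℝ (fun y' => X y' ν) y (Pi.single (w i) 1)) x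
            (Pi.single μ 1)) • v x (Function.update w i ν) :=
      (Finset.sum_congr rfl fun i _ => Finset.sum_comm).trans Finset.sum_comm
    have hB : (∑ i : Fin k, ∑ ν : Fin 3, ∑ μ : Fin 3,
          (fderiv ℝ (fun y => X y μ) x (Pi.single (w i) 1)
            * fderiv ℝ (fun y => Y y ν) x (Pi.single μ 1)) • v x (Function.update w i ν))
        = ∑ i : Fin k, ∑ μ : Fin 3, ∑ ν : Fin 3,
          (fderiv ℝ (fun y => X y μ) x (Pi.single (w i) 1)
            * fderiv ℝ (fun y => Y y ν) x (Pi.single μ 1)) • v x (Function.update w i ν) :=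
      Finset.sum_congr rfl fun i _ => Finset.sum_comm
    have hD : (∑ i : Fin k, ∑ ν : Fin 3, ∑ μ : Fin 3,
          (fderiv ℝ (fun y => Y y μ) x (Pi.single (w i) 1)
            * fderiv ℝ (fun y => X y ν) x (Pi.single μ 1)) • v x (Function.update w i ν))
        = ∑ i : Fin k, ∑ μ : Fin 3, ∑ ν : Fin 3,
          (fderiv ℝ (fun y => Y y μ) x (Pi.single (w i) 1)
            * fderiv ℝ (fun y => X y ν) x (Pi.single μ 1)) • v x (Function.update w i ν) :=
      Finset.sum_congr rfl fun i _ => Finset.sum_comm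
    calc (∑ i : Fin k, ∑ ν : Fin 3,
          fderiv ℝ (fun y => vbracket X Y y ν) x (Pi.single (w i) 1) •
            v x (Function.update w i ν))
        = ∑ i : Fin k, ∑ ν : Fin 3, ∑ μ : Fin 3,
            ((X x μ * fderiv ℝ (fun y => fderiv ℝ (fun y' => Y y' ν) y (Pi.single (w i) 1)) x
                (Pi.single μ 1)) • v x (Function.update w i ν)
            + (fderiv ℝ (fun y => X y μ) x (Pi.single (w i) 1)
                * fderiv ℝ (fun y => Y y ν) x (Pi.single μ 1)) • v x (Function.update w i ν)
            - ((Y x μ * fderiv ℝ (fun y => fderiv ℝ (fun y' => X y' ν) y (Pi.single (w i) 1)) x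
                (Pi.single μ 1)) • v x (Function.update w i ν)
            + (fderiv ℝ (fun y => Y y μ) x (Pi.single (w i) 1)
                * fderiv ℝ (fun y => X y ν) x (Pi.single μ 1)) • v x (Function.update w i ν))) :=
          Finset.sum_congr rfl fun i _ => Finset.sum_congr rfl fun ν _ => key i ν
      _ = _ := by
          simp only [Finset.sum_sub_distrib, Finset.sum_add_distrib]
          rw [hA, hB, hC, hD]
          abel

lemma sum_split_diag (i : Fin k) (t : Fin k → W) :
    ∑ j : Fin k, t j = t i + ∑ j : Fin k, if j = i then 0 else t j := by
  classical
  have h1 : t i = ∑ j : Fin k, if j = i then t j else 0 := by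
    rw [Finset.sum_ite_eq' Finset.univ i t]; simp
  rw [h1, ← Finset.sum_add_distrib]
  refine Finset.sum_congr rfl fun j _ => ?_
  by_cases h : j = i <;> simp [h]

lemma lieD_comm (X Y : Spacetime → Fin 3 → ℝ)
    (hX : ∀ μ, ContDiff ℝ (⊤ : ℕ∞) fun y => X y μ) (hY : ∀ μ, ContDiff ℝ (⊤ : ℕ∞) fun y => Y y μ)
    (v : Form W k) (hv : ∀ w, ContDiff ℝ (⊤ : ℕ∞) fun y => v y w)
    (x : Spacetime) (w : Fin k → Fin 3) :
    lieD X (lieD Y v) x w - lieD Y (lieD X v) x w = lieD (vbracket X Y) v x w := by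
  classical
  -- splitting of the double-update term into diagonal and off-diagonal parts
  have hsplit : ∀ (P Q : Spacetime → Fin 3 → ℝ),
      (∑ i : Fin k, ∑ μ : Fin 3, ∑ j : Fin k, ∑ ν : Fin 3,
          (fderiv ℝ (fun y => P y μ) x (Pi.single (w i) 1)
              * fderiv ℝ (fun y => Q y ν) x (Pi.single (Function.update w i μ j) 1)) •
            v x (Function.update (Function.update w i μ) j ν))
      = (∑ i : Fin k, ∑ μ : Fin 3, ∑ ν : Fin 3,
          (fderiv ℝ (fun y => P y μ) x (Pi.single (w i) 1)
            * fderiv ℝ (fun y => Q y ν) x (Pi.single μ 1)) • v x (Function.update w i ν))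
        + ∑ i : Fin k, ∑ j : Fin k, if j = i then 0 else ∑ μ : Fin 3, ∑ ν : Fin 3,
            (fderiv ℝ (fun y => P y μ) x (Pi.single (w i) 1)
              * fderiv ℝ (fun y => Q y ν) x (Pi.single (w j) 1)) •
              v x (Function.update (Function.update w i μ) j ν) := by
    intro P Q
    have step : ∀ i : Fin k,
        (∑ μ : Fin 3, ∑ j : Fin k, ∑ ν : Fin 3,
          (fderiv ℝ (fun y => P y μ) x (Pi.single (w i) 1)
              * fderiv ℝ (fun y => Q y ν) x (Pi.single (Function.update w i μ j) 1)) •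
            v x (Function.update (Function.update w i μ) j ν))
        = (∑ μ : Fin 3, ∑ ν : Fin 3,
            (fderiv ℝ (fun y => P y μ) x (Pi.single (w i) 1)
              * fderiv ℝ (fun y => Q y ν) x (Pi.single μ 1)) • v x (Function.update w i ν))
          + ∑ j : Fin k, if j = i then 0 else ∑ μ : Fin 3, ∑ ν : Fin 3,
              (fderiv ℝ (fun y => P y μ) x (Pi.single (w i) 1)
                * fderiv ℝ (fun y => Q y ν) x (Pi.single (w j) 1)) •
                v x (Function.update (Function.update w i μ) j ν) := by
      intro i
      rw [Finset.sum_comm]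
      have := sum_split_diag (W := W) i (fun j => ∑ μ : Fin 3, ∑ ν : Fin 3,
        (fderiv ℝ (fun y => P y μ) x (Pi.single (w i) 1)
            * fderiv ℝ (fun y => Q y ν) x (Pi.single (Function.update w i μ j) 1)) •
          v x (Function.update (Function.update w i μ) j ν))
      rw [this]
      congr 1
      · refine Finset.sum_congr rfl fun μ _ => Finset.sum_congr rfl fun ν _ => ?_
        rw [Function.update_self, Function.update_idem]
      · refine Finset.sum_congr rfl fun j _ => ?_
        rcases eq_or_ne j i with h | h
        · simp [h]
        · rw [if_neg h, if_neg h]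
          refine Finset.sum_congr rfl fun μ _ => Finset.sum_congr rfl fun ν _ => ?_
          rw [Function.update_of_ne h]
    calc (∑ i : Fin k, ∑ μ : Fin 3, ∑ j : Fin k, ∑ ν : Fin 3,
          (fderiv ℝ (fun y => P y μ) x (Pi.single (w i) 1)
              * fderiv ℝ (fun y => Q y ν) x (Pi.single (Function.update w i μ j) 1)) •
            v x (Function.update (Function.update w i μ) j ν))
        = ∑ i : Fin k,
            ((∑ μ : Fin 3, ∑ ν : Fin 3,
              (fderiv ℝ (fun y => P y μ) x (Pi.single (w i) 1)
                * fderiv ℝ (fun y => Q y ν) x (Pi.single μ 1)) • v x (Function.update w i ν))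
            + ∑ j : Fin k, if j = i then 0 else ∑ μ : Fin 3, ∑ ν : Fin 3,
                (fderiv ℝ (fun y => P y μ) x (Pi.single (w i) 1)
                  * fderiv ℝ (fun y => Q y ν) x (Pi.single (w j) 1)) •
                  v x (Function.update (Function.update w i μ) j ν)) :=
          Finset.sum_congr rfl fun i _ => step i
      _ = _ := Finset.sum_add_distrib
  -- symmetry of the off-diagonal part
  have hoff : (∑ i : Fin k, ∑ j : Fin k, if j = i then 0 else ∑ μ : Fin 3, ∑ ν : Fin 3,
        (fderiv ℝ (fun y => X y μ) x (Pi.single (w i) 1)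
          * fderiv ℝ (fun y => Y y ν) x (Pi.single (w j) 1)) •
          v x (Function.update (Function.update w i μ) j ν))
      = ∑ i : Fin k, ∑ j : Fin k, if j = i then 0 else ∑ μ : Fin 3, ∑ ν : Fin 3,
        (fderiv ℝ (fun y => Y y μ) x (Pi.single (w i) 1)
          * fderiv ℝ (fun y => X y ν) x (Pi.single (w j) 1)) •
          v x (Function.update (Function.update w i μ) j ν) := by
    rw [Finset.sum_comm]
    refine Finset.sum_congr rfl fun i _ => Finset.sum_congr rfl fun j _ => ?_
    rcases eq_or_ne i j with h | h
    · simp [h]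
    · rw [if_neg h, if_neg (Ne.symm h), Finset.sum_comm]
      refine Finset.sum_congr rfl fun μ _ => Finset.sum_congr rfl fun ν _ => ?_
      rw [mul_comm, Function.update_comm (Ne.symm h)]
  have hE1 : (∑ μ : Fin 3, ∑ ν : Fin 3, (X x μ * Y x ν) •
        fderiv ℝ (fun y => fderiv ℝ (fun y' => v y' w) y (Pi.single ν 1)) x (Pi.single μ 1))
      = ∑ μ : Fin 3, ∑ ν : Fin 3, (Y x μ * X x ν) •
        fderiv ℝ (fun y => fderiv ℝ (fun y' => v y' w) y (Pi.single ν 1)) x (Pi.single μ 1) := by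
    refine Eq.trans Finset.sum_comm ?_
    refine Finset.sum_congr rfl fun μ _ => Finset.sum_congr rfl fun ν _ => ?_
    rw [mul_comm, pd_comm (hv w) ν μ x]
  have h35 : (∑ μ : Fin 3, ∑ i : Fin k, ∑ ν : Fin 3,
        (X x μ * fderiv ℝ (fun y => Y y ν) x (Pi.single (w i) 1)) •
          fderiv ℝ (fun y => v y (Function.update w i ν)) x (Pi.single μ 1))
      = ∑ i : Fin k, ∑ μ : Fin 3, ∑ ν : Fin 3,
        (fderiv ℝ (fun y => Y y μ) x (Pi.single (w i) 1) * X x ν) •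
          fderiv ℝ (fun y => v y (Function.update w i μ)) x (Pi.single ν 1) := by
    refine Eq.trans Finset.sum_comm ?_
    refine Finset.sum_congr rfl fun i _ => Eq.trans Finset.sum_comm ?_
    refine Finset.sum_congr rfl fun μ _ => Finset.sum_congr rfl fun ν _ => ?_
    rw [mul_comm]
  have h53 : (∑ i : Fin k, ∑ μ : Fin 3, ∑ ν : Fin 3,
        (fderiv ℝ (fun y => X y μ) x (Pi.single (w i) 1) * Y x ν) •
          fderiv ℝ (fun y => v y (Function.update w i μ)) x (Pi.single ν 1))
      = ∑ μ : Fin 3, ∑ i : Fin k, ∑ ν : Fin 3,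
        (Y x μ * fderiv ℝ (fun y => X y ν) x (Pi.single (w i) 1)) •
          fderiv ℝ (fun y => v y (Function.update w i ν)) x (Pi.single μ 1) := by
    refine Eq.trans ?_ Finset.sum_comm
    refine Finset.sum_congr rfl fun i _ => Eq.trans ?_ Finset.sum_comm
    refine Finset.sum_congr rfl fun μ _ => Finset.sum_congr rfl fun ν _ => ?_
    rw [mul_comm]
  rw [lieD_lieD_expand X Y hX hY v hv x w, lieD_lieD_expand Y X hY hX v hv x w,
    lieD_vbracket_expand X Y hX hY v x w, hsplit X Y, hsplit Y X, hoff, hE1, h35, h53]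
  abel

end Helpers6
section MainHelpers
variable {V : Type*} [NormedAddCommGroup V] [NormedSpace ℂ V]

/-- Restriction of scalars, as a continuous `ℝ`-linear map. -/
noncomputable def RSL : (V →L[ℂ] V) →L[ℝ] (V →L[ℝ] V) :=
  ContinuousLinearMap.restrictScalarsL ℂ V V ℝ ℝ

lemma fderiv_RSL_comp {f : Spacetime → (V →L[ℂ] V)} {x : Spacetime}
    (hf : DifferentiableAt ℝ f x) (s : Spacetime) :
    fderiv ℝ (fun y => RSL (f y)) x s = RSL (fderiv ℝ f x s) := by
  rw [show (fun y => RSL (f y)) = (⇑(RSL (V := V)) ∘ f) from rfl,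
    ((RSL (V := V)).hasFDerivAt.comp x hf.hasFDerivAt).fderiv]
  rfl

lemma fderiv_aform (A : Form (V →L[ℂ] V) 1) (hA : ∀ w, ContDiff ℝ (⊤ : ℕ∞) fun y => A y w)
    (Z : Spacetime → Fin 3 → ℝ) (hZ : ∀ μ, ContDiff ℝ (⊤ : ℕ∞) fun y => Z y μ)
    (x : Spacetime) (s : Spacetime) :
    fderiv ℝ (fun y => ∑ μ : Fin 3, Z y μ • A y ![μ]) x s =
      ∑ μ : Fin 3, (Z x μ • fderiv ℝ (fun y => A y ![μ]) x s
        + fderiv ℝ (fun y => Z y μ) x s • A x ![μ]) := by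
  rw [fderiv_fun_sum (fun μ _ => (diffAt_of_smooth (hZ μ) x).fun_smul (diffAt_of_smooth (hA ![μ]) x))]
  simp only [ContinuousLinearMap.coe_sum', Finset.sum_apply]
  refine Finset.sum_congr rfl fun μ _ => ?_
  rw [fderiv_fun_smul (diffAt_of_smooth (hZ μ) x) (diffAt_of_smooth (hA ![μ]) x)]
  simp

end MainHelpers
set_option maxHeartbeats 3200000

/-- **`[L^A_X, L^A_Y] v = L^A_{[X,Y]} v + (ι_Y ι_X F) v`:** the commutator of two
covariant Lie derivatives along vector fields `X, Y`, acting on a `V`-valued `k`-form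
`v`. -/
theorem stmt10 {V : Type*} [NormedAddCommGroup V] [NormedSpace ℂ V]
    (A : Form (V →L[ℂ] V) 1) (hA : ∀ w, ContDiff ℝ (⊤ : ℕ∞) fun y => A y w)
    (X Y : Spacetime → Fin 3 → ℝ)
    (hX : ∀ μ, ContDiff ℝ (⊤ : ℕ∞) fun y => X y μ) (hY : ∀ μ, ContDiff ℝ (⊤ : ℕ∞) fun y => Y y μ)
    {k : ℕ} (v : Form V k) (hvAlt : IsAlt v)
    (hv : ∀ w, ContDiff ℝ (⊤ : ℕ∞) fun y => v y w) :
    ∀ (x : Spacetime) (w : Fin k → Fin 3),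
      covLie A X (covLie A Y v) x w - covLie A Y (covLie A X v) x w =
        covLie A (vbracket X Y) v x w +
          (iprod (k := 0) Y (iprod (k := 1) X (curv A)) x Fin.elim0) (v x w) := by
  intro x w
  classical
  -- smoothness facts
  have hcX : ContDiff ℝ (⊤ : ℕ∞) (fun y => RSL (∑ μ : Fin 3, X y μ • A y ![μ])) :=
    (RSL (V := V)).contDiff.comp (ContDiff.sum fun μ _ => (hX μ).smul (hA ![μ]))
  have hcY : ContDiff ℝ (⊤ : ℕ∞) (fun y => RSL (∑ μ : Fin 3, Y y μ • A y ![μ])) :=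
    (RSL (V := V)).contDiff.comp (ContDiff.sum fun μ _ => (hY μ).smul (hA ![μ]))
  have daX : DifferentiableAt ℝ (fun y => ∑ μ : Fin 3, X y μ • A y ![μ]) x :=
    DifferentiableAt.fun_sum fun μ _ =>
      (diffAt_of_smooth (hX μ) x).fun_smul (diffAt_of_smooth (hA ![μ]) x)
  have daY : DifferentiableAt ℝ (fun y => ∑ μ : Fin 3, Y y μ • A y ![μ]) x :=
    DifferentiableAt.fun_sum fun μ _ =>
      (diffAt_of_smooth (hY μ) x).fun_smul (diffAt_of_smooth (hA ![μ]) x)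
  -- expansion of the left-hand side
  have EX : covLie A X (covLie A Y v) x w =
      lieD X (lieD Y v) x w
      + ((∑ ν : Fin 3, X x ν •
            (fderiv ℝ (fun y => RSL (∑ μ : Fin 3, Y y μ • A y ![μ])) x (Pi.single ν 1)) (v x w))
          + RSL (∑ μ : Fin 3, Y x μ • A x ![μ]) (lieD X v x w))
      + (RSL (∑ μ : Fin 3, X x μ • A x ![μ]) (lieD Y v x w)
          + RSL (∑ μ : Fin 3, X x μ • A x ![μ])
              (RSL (∑ μ : Fin 3, Y x μ • A x ![μ]) (v x w))) := by
    have e1 : covLie A X (covLie A Y v) x w =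
        lieD X (fun y w' => lieD Y v y w'
            + RSL (∑ μ : Fin 3, Y y μ • A y ![μ]) (v y w')) x w
          + RSL (∑ μ : Fin 3, X x μ • A x ![μ])
              (lieD Y v x w + RSL (∑ μ : Fin 3, Y x μ • A x ![μ]) (v x w)) := rfl
    rw [e1, lieD_add_pt X (lieD Y v)
        (fun y w' => RSL (∑ μ : Fin 3, Y y μ • A y ![μ]) (v y w')) x
        (fun w' => diffAt_of_smooth (smooth_lieD Y hY v hv w') x)
        (fun w' => diffAt_of_smooth (hcY.clm_apply (hv w')) x) w,
      lieD_clm_pt X (fun y => RSL (∑ μ : Fin 3, Y y μ • A y ![μ])) v x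
        (diffAt_of_smooth hcY x) (fun w' => diffAt_of_smooth (hv w') x) w,
      map_add]
  have EY : covLie A Y (covLie A X v) x w =
      lieD Y (lieD X v) x w
      + ((∑ ν : Fin 3, Y x ν •
            (fderiv ℝ (fun y => RSL (∑ μ : Fin 3, X y μ • A y ![μ])) x (Pi.single ν 1)) (v x w))
          + RSL (∑ μ : Fin 3, X x μ • A x ![μ]) (lieD Y v x w))
      + (RSL (∑ μ : Fin 3, Y x μ • A x ![μ]) (lieD X v x w)
          + RSL (∑ μ : Fin 3, Y x μ • A x ![μ])
              (RSL (∑ μ : Fin 3, X x μ • A x ![μ]) (v x w))) := by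
    have e1 : covLie A Y (covLie A X v) x w =
        lieD Y (fun y w' => lieD X v y w'
            + RSL (∑ μ : Fin 3, X y μ • A y ![μ]) (v y w')) x w
          + RSL (∑ μ : Fin 3, Y x μ • A x ![μ])
              (lieD X v x w + RSL (∑ μ : Fin 3, X x μ • A x ![μ]) (v x w)) := rfl
    rw [e1, lieD_add_pt Y (lieD X v)
        (fun y w' => RSL (∑ μ : Fin 3, X y μ • A y ![μ]) (v y w')) x
        (fun w' => diffAt_of_smooth (smooth_lieD X hX v hv w') x)
        (fun w' => diffAt_of_smooth (hcX.clm_apply (hv w')) x) w,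
      lieD_clm_pt Y (fun y => RSL (∑ μ : Fin 3, X y μ • A y ![μ])) v x
        (diffAt_of_smooth hcX x) (fun w' => diffAt_of_smooth (hv w') x) w,
      map_add]
  have eR : covLie A (vbracket X Y) v x w =
      lieD (vbracket X Y) v x w
        + (∑ μ : Fin 3, vbracket X Y x μ • A x ![μ]) (v x w) := rfl
  have hcomm := lieD_comm X Y hX hY v hv x w
  have hAlg : ((∑ ν : Fin 3, X x ν •
          (fderiv ℝ (fun y => RSL (∑ μ : Fin 3, Y y μ • A y ![μ])) x (Pi.single ν 1)) (v x w))
        + RSL (∑ μ : Fin 3, X x μ • A x ![μ]) (RSL (∑ μ : Fin 3, Y x μ • A x ![μ]) (v x w)))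
      - ((∑ ν : Fin 3, Y x ν •
          (fderiv ℝ (fun y => RSL (∑ μ : Fin 3, X y μ • A y ![μ])) x (Pi.single ν 1)) (v x w))
        + RSL (∑ μ : Fin 3, Y x μ • A x ![μ]) (RSL (∑ μ : Fin 3, X x μ • A x ![μ]) (v x w)))
      = (∑ μ : Fin 3, vbracket X Y x μ • A x ![μ]) (v x w)
        + (iprod (k := 0) Y (iprod (k := 1) X (curv A)) x Fin.elim0) (v x w) := by
    have hfcY : ∀ ν : Fin 3,
        (fderiv ℝ (fun y => RSL (∑ μ : Fin 3, Y y μ • A y ![μ])) x (Pi.single ν 1)) (v x w)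
        = ∑ μ : Fin 3, (Y x μ • (fderiv ℝ (fun y => A y ![μ]) x (Pi.single ν 1)) (v x w)
            + fderiv ℝ (fun y => Y y μ) x (Pi.single ν 1) • (A x ![μ]) (v x w)) := by
      intro ν
      rw [fderiv_RSL_comp daY, fderiv_aform A hA Y hY x (Pi.single ν 1)]
      show (∑ μ : Fin 3, (Y x μ • fderiv ℝ (fun y => A y ![μ]) x (Pi.single ν 1)
          + fderiv ℝ (fun y => Y y μ) x (Pi.single ν 1) • A x ![μ])) (v x w) = _
      simp only [ContinuousLinearMap.coe_sum', Finset.sum_apply, ContinuousLinearMap.add_apply,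
        ContinuousLinearMap.smul_apply]
    have hfcX : ∀ ν : Fin 3,
        (fderiv ℝ (fun y => RSL (∑ μ : Fin 3, X y μ • A y ![μ])) x (Pi.single ν 1)) (v x w)
        = ∑ μ : Fin 3, (X x μ • (fderiv ℝ (fun y => A y ![μ]) x (Pi.single ν 1)) (v x w)
            + fderiv ℝ (fun y => X y μ) x (Pi.single ν 1) • (A x ![μ]) (v x w)) := by
      intro ν
      rw [fderiv_RSL_comp daX, fderiv_aform A hA X hX x (Pi.single ν 1)]
      show (∑ μ : Fin 3, (X x μ • fderiv ℝ (fun y => A y ![μ]) x (Pi.single ν 1)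
          + fderiv ℝ (fun y => X y μ) x (Pi.single ν 1) • A x ![μ])) (v x w) = _
      simp only [ContinuousLinearMap.coe_sum', Finset.sum_apply, ContinuousLinearMap.add_apply,
        ContinuousLinearMap.smul_apply]
    have hS : (∑ ν : Fin 3, X x ν •
          (fderiv ℝ (fun y => RSL (∑ μ : Fin 3, Y y μ • A y ![μ])) x (Pi.single ν 1)) (v x w))
        = ∑ ν : Fin 3, ∑ μ : Fin 3,
            ((X x ν * Y x μ) • (fderiv ℝ (fun y => A y ![μ]) x (Pi.single ν 1)) (v x w)
            + (X x ν * fderiv ℝ (fun y => Y y μ) x (Pi.single ν 1)) • (A x ![μ]) (v x w)) := by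
      refine Finset.sum_congr rfl fun ν _ => ?_
      rw [hfcY ν, Finset.smul_sum]
      exact Finset.sum_congr rfl fun μ _ => by rw [smul_add, smul_smul, smul_smul]
    have hT : (∑ ν : Fin 3, Y x ν •
          (fderiv ℝ (fun y => RSL (∑ μ : Fin 3, X y μ • A y ![μ])) x (Pi.single ν 1)) (v x w))
        = ∑ ν : Fin 3, ∑ μ : Fin 3,
            ((Y x ν * X x μ) • (fderiv ℝ (fun y => A y ![μ]) x (Pi.single ν 1)) (v x w)
            + (Y x ν * fderiv ℝ (fun y => X y μ) x (Pi.single ν 1)) • (A x ![μ]) (v x w)) := by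
      refine Finset.sum_congr rfl fun ν _ => ?_
      rw [hfcX ν, Finset.smul_sum]
      exact Finset.sum_congr rfl fun μ _ => by rw [smul_add, smul_smul, smul_smul]
    have hXYc : RSL (∑ μ : Fin 3, X x μ • A x ![μ]) (RSL (∑ μ : Fin 3, Y x μ • A x ![μ]) (v x w))
        = ∑ μ : Fin 3, ∑ ν : Fin 3, (X x μ * Y x ν) • (A x ![μ]) ((A x ![ν]) (v x w)) := by
      show (∑ μ : Fin 3, X x μ • A x ![μ]) ((∑ ν : Fin 3, Y x ν • A x ![ν]) (v x w)) = _
      simp only [ContinuousLinearMap.coe_sum', Finset.sum_apply, ContinuousLinearMap.smul_apply,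
        map_sum, ContinuousLinearMap.map_smul_of_tower, Finset.smul_sum, smul_smul]
      refine Eq.trans Finset.sum_comm ?_
      exact Finset.sum_congr rfl fun μ _ => Finset.sum_congr rfl fun ν _ => by rw [mul_comm]
    have hYXc : RSL (∑ μ : Fin 3, Y x μ • A x ![μ]) (RSL (∑ μ : Fin 3, X x μ • A x ![μ]) (v x w))
        = ∑ μ : Fin 3, ∑ ν : Fin 3, (Y x μ * X x ν) • (A x ![μ]) ((A x ![ν]) (v x w)) := by
      show (∑ μ : Fin 3, Y x μ • A x ![μ]) ((∑ ν : Fin 3, X x ν • A x ![ν]) (v x w)) = _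
      simp only [ContinuousLinearMap.coe_sum', Finset.sum_apply, ContinuousLinearMap.smul_apply,
        map_sum, ContinuousLinearMap.map_smul_of_tower, Finset.smul_sum, smul_smul]
      refine Eq.trans Finset.sum_comm ?_
      exact Finset.sum_congr rfl fun μ _ => Finset.sum_congr rfl fun ν _ => by rw [mul_comm]
    have haB : (∑ μ : Fin 3, vbracket X Y x μ • A x ![μ]) (v x w)
        = ∑ μ : Fin 3, ∑ ν : Fin 3,
            ((X x ν * fderiv ℝ (fun y => Y y μ) x (Pi.single ν 1)) • (A x ![μ]) (v x w)
            - (Y x ν * fderiv ℝ (fun y => X y μ) x (Pi.single ν 1)) • (A x ![μ]) (v x w)) := by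
      simp only [ContinuousLinearMap.coe_sum', Finset.sum_apply, ContinuousLinearMap.smul_apply]
      refine Finset.sum_congr rfl fun μ _ => ?_
      rw [show vbracket X Y x μ = ∑ ν : Fin 3,
          (X x ν * fderiv ℝ (fun y => Y y μ) x (Pi.single ν 1)
            - Y x ν * fderiv ℝ (fun y => X y μ) x (Pi.single ν 1)) from rfl,
        Finset.sum_smul]
      exact Finset.sum_congr rfl fun ν _ => by rw [sub_smul]
    have hw2 : ∀ μ ν : Fin 3, curv A x (Fin.cons μ (Fin.cons ν Fin.elim0))
        = fderiv ℝ (fun y => A y ![ν]) x (Pi.single μ 1)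
          - fderiv ℝ (fun y => A y ![μ]) x (Pi.single ν 1)
          + ((A x ![μ]).comp (A x ![ν]) - (A x ![ν]).comp (A x ![μ])) := fun μ ν => rfl
    have hF : (iprod (k := 0) Y (iprod (k := 1) X (curv A)) x Fin.elim0) (v x w)
        = ∑ ν : Fin 3, ∑ μ : Fin 3,
            (((Y x ν * X x μ) • (fderiv ℝ (fun y => A y ![ν]) x (Pi.single μ 1)) (v x w)
            - (Y x ν * X x μ) • (fderiv ℝ (fun y => A y ![μ]) x (Pi.single ν 1)) (v x w))
            + ((Y x ν * X x μ) • (A x ![μ]) ((A x ![ν]) (v x w))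
            - (Y x ν * X x μ) • (A x ![ν]) ((A x ![μ]) (v x w)))) := by
      show (∑ ν : Fin 3, Y x ν • ∑ μ : Fin 3,
          X x μ • curv A x (Fin.cons μ (Fin.cons ν Fin.elim0))) (v x w) = _
      simp only [hw2, ContinuousLinearMap.coe_sum', Finset.sum_apply,
        ContinuousLinearMap.smul_apply, ContinuousLinearMap.sub_apply,
        ContinuousLinearMap.add_apply, ContinuousLinearMap.coe_comp', Function.comp_apply,
        Finset.smul_sum, smul_smul, smul_sub, smul_add]
    rw [hS, hT, hXYc, hYXc, haB, hF]
    simp only [Finset.sum_add_distrib, Finset.sum_sub_distrib]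
    have c1 : (∑ ν : Fin 3, ∑ μ : Fin 3,
          (X x ν * Y x μ) • (fderiv ℝ (fun y => A y ![μ]) x (Pi.single ν 1)) (v x w))
        = ∑ ν : Fin 3, ∑ μ : Fin 3,
          (Y x ν * X x μ) • (fderiv ℝ (fun y => A y ![ν]) x (Pi.single μ 1)) (v x w) := by
      refine Eq.trans Finset.sum_comm ?_
      exact Finset.sum_congr rfl fun ν _ => Finset.sum_congr rfl fun μ _ => by rw [mul_comm]
    have c2 : (∑ ν : Fin 3, ∑ μ : Fin 3,
          (X x ν * fderiv ℝ (fun y => Y y μ) x (Pi.single ν 1)) • (A x ![μ]) (v x w))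
        = ∑ μ : Fin 3, ∑ ν : Fin 3,
          (X x ν * fderiv ℝ (fun y => Y y μ) x (Pi.single ν 1)) • (A x ![μ]) (v x w) :=
      Finset.sum_comm
    have c3 : (∑ ν : Fin 3, ∑ μ : Fin 3,
          (Y x ν * fderiv ℝ (fun y => X y μ) x (Pi.single ν 1)) • (A x ![μ]) (v x w))
        = ∑ μ : Fin 3, ∑ ν : Fin 3,
          (Y x ν * fderiv ℝ (fun y => X y μ) x (Pi.single ν 1)) • (A x ![μ]) (v x w) :=
      Finset.sum_comm
    have c4 : (∑ μ : Fin 3, ∑ ν : Fin 3,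
          (X x μ * Y x ν) • (A x ![μ]) ((A x ![ν]) (v x w)))
        = ∑ ν : Fin 3, ∑ μ : Fin 3,
          (Y x ν * X x μ) • (A x ![μ]) ((A x ![ν]) (v x w)) := by
      refine Eq.trans Finset.sum_comm ?_
      exact Finset.sum_congr rfl fun ν _ => Finset.sum_congr rfl fun μ _ => by rw [mul_comm]
    rw [c1, c2, c3, c4]
    abel
  rw [EX, EY, eR, ← hcomm,
    add_assoc (lieD X (lieD Y v) x w - lieD Y (lieD X v) x w), ← hAlg]
  abel
end
end

section
/- Let V be a complex inner product space on which a Lie algebra g with orthonormal basis {e_A} acts by anti-Hermitian operators, with the bi-invariance property ⟨[a,b],c⟩_g + ⟨b,[a,c]⟩_g = 0. Define the g-valued bilinear form ⟦φ¹,φ²⟧ := (1/2) Σ_A (⟨e_A·φ¹, φ²⟩ + ⟨φ², e_A·φ¹⟩) e_A. Then ⟦·,·⟧ is antisymmetric: ⟦φ¹,φ²⟧ = −⟦φ²,φ¹⟧, and for any connection 1-form A and vector field X, the covariant Leibniz rule holds: D_X ⟦φ¹,φ²⟧ = ⟦D_X φ¹, φ²⟧ + ⟦φ¹, D_X φ²⟧,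 where D_X acts on g-valued functions by the adjoint action and on V-valued functions by the given representation. -/
/-!
Testing against `b : g` characterises the form `⟦v, w⟧ = momentForm ρ e v w`:
`⟪b, ⟦v, w⟧⟫ = Re ⟪ρ b v, w⟫`, the symmetrised sum in its definition being twice a real part.
Antisymmetry is then the anti-Hermiticity of `ρ b`, and the covariant Leibniz rule is the
ordinary product rule together with the equivariance `[a, ⟦v, w⟧] = ⟦ρ a v, w⟧ + ⟦v, ρ a w⟧`,
which follows from the invariance of the inner product on `g` and from `ρ` being a
representation.
-/

open scoped InnerProductSpace

noncomputable section

theorem OrthonormalBasis.inner_sum_apply_smul {ι E : Type*} [Fintype ι]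
    [NormedAddCommGroup E] [InnerProductSpace ℝ E] (e : OrthonormalBasis ι ℝ E)
    (f : E →ₗ[ℝ] ℝ) (b : E) : ⟪b, ∑ i, f (e i) • e i⟫_ℝ = f b := by
  conv_rhs => rw [← e.sum_repr' b]
  simp [inner_sum, real_inner_smul_right, real_inner_comm, mul_comm]

section MomentForm

variable {g V ι : Type*} [NormedAddCommGroup g] [InnerProductSpace ℝ g]
  [NormedAddCommGroup V] [InnerProductSpace ℂ V] [Fintype ι]
  (ρ : g →ₗ[ℝ] (V →L[ℂ] V)) (e : OrthonormalBasis ι ℝ g)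

def reInnerAction (v w : V) : g →ₗ[ℝ] ℝ where
  toFun b := (⟪ρ b v, w⟫_ℂ).re
  map_add' a b := by simp
  map_smul' c b := by
    rw [map_smul, smul_apply, ← Complex.coe_smul, inner_smul_left, Complex.conj_ofReal,
      Complex.re_ofReal_mul, RingHom.id_apply, smul_eq_mul]

def momentForm (v w : V) : g := ∑ A, reInnerAction ρ v w (e A) • e A

theorem momentForm_eq_sum_half_re (v w : V) :
    momentForm ρ e v w =
      ∑ A, ((1 / 2 : ℝ) * (⟪ρ (e A) v, w⟫_ℂ + ⟪w, ρ (e A) v⟫_ℂ).re) • e A := by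
  refine Finset.sum_congr rfl fun A _ => congrArg (· • e A) ?_
  rw [Complex.add_re, ← inner_conj_symm w, Complex.conj_re]
  simp only [reInnerAction, LinearMap.coe_mk, AddHom.coe_mk]
  ring

theorem inner_momentForm (b : g) (v w : V) :
    ⟪b, momentForm ρ e v w⟫_ℝ = (⟪ρ b v, w⟫_ℂ).re :=
  e.inner_sum_apply_smul _ b

theorem momentForm_add_left (u v w : V) :
    momentForm ρ e (u + v) w = momentForm ρ e u w + momentForm ρ e v w :=
  ext_inner_left ℝ fun b => by simp [inner_momentForm, inner_add_right]

theorem momentForm_add_right (u v w : V) :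
    momentForm ρ e u (v + w) = momentForm ρ e u v + momentForm ρ e u w :=
  ext_inner_left ℝ fun b => by simp [inner_momentForm, inner_add_right]

theorem fderiv_momentForm_apply {E : Type*} [NormedAddCommGroup E] [NormedSpace ℝ E]
    {f₁ f₂ : E → V} {x : E} (hf₁ : DifferentiableAt ℝ f₁ x)
    (hf₂ : DifferentiableAt ℝ f₂ x) (d : E) :
    fderiv ℝ (fun y => momentForm ρ e (f₁ y) (f₂ y)) x d =
      momentForm ρ e (fderiv ℝ f₁ x d) (f₂ x) + momentForm ρ e (f₁ x) (fderiv ℝ f₂ x d) := by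
  have hcoeff : ∀ A, HasFDerivAt (fun y => (⟪ρ (e A) (f₁ y), f₂ y⟫_ℂ).re) _ x := fun A =>
    Complex.reCLM.hasFDerivAt.comp x
      (((ρ (e A)).restrictScalars ℝ).hasFDerivAt.comp x hf₁.hasFDerivAt |>.inner ℂ
        hf₂.hasFDerivAt)
  have hsum : HasFDerivAt (fun y => momentForm ρ e (f₁ y) (f₂ y)) _ x :=
    HasFDerivAt.fun_sum (u := Finset.univ) fun A _ => (hcoeff A).smul_const (e A)
  rw [hsum.fderiv]
  simp only [sum_apply, ContinuousLinearMap.smulRight_apply, ContinuousLinearMap.comp_apply,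
    ContinuousLinearMap.prod_apply, ContinuousLinearMap.coe_restrictScalars',
    fderivInnerCLM_apply, Complex.reCLM_apply, Complex.add_re, add_smul,
    Finset.sum_add_distrib, momentForm, reInnerAction, LinearMap.coe_mk, AddHom.coe_mk]
  exact add_comm _ _

variable {ρ}

theorem momentForm_swap (hanti : ∀ (a : g) (v w : V), ⟪ρ a v, w⟫_ℂ = -⟪v, ρ a w⟫_ℂ)
    (v w : V) : momentForm ρ e w v = -momentForm ρ e v w :=
  ext_inner_left ℝ fun b => by
    rw [inner_neg_right, inner_momentForm, inner_momentForm, hanti, ← inner_conj_symm,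
      Complex.neg_re, Complex.conj_re]

theorem bracket_momentForm (bracket : g →ₗ[ℝ] g →ₗ[ℝ] g)
    (hinv : ∀ a b c : g, ⟪bracket a b, c⟫_ℝ + ⟪b, bracket a c⟫_ℝ = 0)
    (hrep : ∀ a b : g, ρ (bracket a b) = ρ a ∘L ρ b - ρ b ∘L ρ a)
    (hanti : ∀ (a : g) (v w : V), ⟪ρ a v, w⟫_ℂ = -⟪v, ρ a w⟫_ℂ) (a : g) (v w : V) :
    bracket a (momentForm ρ e v w) = momentForm ρ e (ρ a v) w + momentForm ρ e v (ρ a w) :=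
  ext_inner_left ℝ fun b => by
    have hb : ⟪b, bracket a (momentForm ρ e v w)⟫_ℝ =
        -⟪bracket a b, momentForm ρ e v w⟫_ℝ :=
      eq_neg_of_add_eq_zero_right (hinv a b _)
    rw [hb, inner_add_right, inner_momentForm, inner_momentForm, inner_momentForm, hrep]
    simp only [sub_apply, ContinuousLinearMap.comp_apply, inner_sub_left, hanti a,
      Complex.sub_re, Complex.neg_re]
    ring

end MomentForm

theorem stmt13_general
    {g : Type*} [NormedAddCommGroup g] [InnerProductSpace ℝ g]
    {V : Type*} [NormedAddCommGroup V] [InnerProductSpace ℂ V]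
    {ι : Type*} [Fintype ι]
    (bracket : g →ₗ[ℝ] g →ₗ[ℝ] g)
    (hinv : ∀ a b c : g, ⟪bracket a b, c⟫_ℝ + ⟪b, bracket a c⟫_ℝ = 0)
    (e : OrthonormalBasis ι ℝ g)
    (ρ : g →ₗ[ℝ] (V →L[ℂ] V))
    (hrep : ∀ a b : g, ρ (bracket a b) = ρ a ∘L ρ b - ρ b ∘L ρ a)
    (hanti : ∀ (a : g) (v w : V), ⟪(ρ a) v, w⟫_ℂ = -⟪v, (ρ a) w⟫_ℂ)
    (bbrk : V → V → g)
    (hbbrk : ∀ v w : V, bbrk v w =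
      ∑ A, ((1 / 2 : ℝ) * (⟪(ρ (e A)) v, w⟫_ℂ + ⟪w, (ρ (e A)) v⟫_ℂ).re) • e A)
    (Aconn : Spacetime → Fin 3 → g) (X : Spacetime → Fin 3 → ℝ)
    (φ₁ φ₂ : Spacetime → V)
    (hφ₁ : Differentiable ℝ φ₁) (hφ₂ : Differentiable ℝ φ₂) :
    (∀ v w : V, bbrk v w = -bbrk w v) ∧
    (∀ x : Spacetime,
      fderiv ℝ (fun y => bbrk (φ₁ y) (φ₂ y)) x (X x) +
          bracket (∑ μ, X x μ • Aconn x μ) (bbrk (φ₁ x) (φ₂ x)) =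
        bbrk (fderiv ℝ φ₁ x (X x) + (ρ (∑ μ, X x μ • Aconn x μ)) (φ₁ x)) (φ₂ x) +
          bbrk (φ₁ x) (fderiv ℝ φ₂ x (X x) + (ρ (∑ μ, X x μ • Aconn x μ)) (φ₂ x))) := by
  obtain rfl : bbrk = momentForm ρ e :=
    funext₂ fun v w => (hbbrk v w).trans (momentForm_eq_sum_half_re ρ e v w).symm
  refine ⟨fun v w => momentForm_swap e hanti w v, fun x => ?_⟩
  rw [fderiv_momentForm_apply ρ e (hφ₁ x) (hφ₂ x), bracket_momentForm e bracket hinv hrep hanti,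
    momentForm_add_left, momentForm_add_right]
  abel

/-- **Antisymmetry and covariant Leibniz rule for the form `⟦·,·⟧`.**
`g` is a real Lie algebra (bracket encoded as an antisymmetric bilinear map `bracket`
satisfying the Jacobi identity) with a positive-definite inner product obeying the
bi-invariance identity, `{e_A}` an orthonormal basis, and `V` a complex Hermitian
vector space on which `g` acts by anti-Hermitian operators via a representation `ρ`.
With `⟦φ¹,φ²⟧ := (1/2) Σ_A (⟨e_A·φ¹, φ²⟩ + ⟨φ², e_A·φ¹⟩) e_A`, the form `⟦·,·⟧` is
antisymmetric, and for any connection 1-form `A` and vector field `X` the covariant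
Leibniz rule `D_X ⟦φ¹,φ²⟧ = ⟦D_X φ¹, φ²⟧ + ⟦φ¹, D_X φ²⟧` holds, where `D_X` acts on
`g`-valued functions via the adjoint action and on `V`-valued functions via `ρ`. -/
theorem stmt13
    {g : Type*} [NormedAddCommGroup g] [InnerProductSpace ℝ g] [FiniteDimensional ℝ g]
    {V : Type*} [NormedAddCommGroup V] [InnerProductSpace ℂ V]
    {ι : Type*} [Fintype ι] [DecidableEq ι]
    (bracket : g →ₗ[ℝ] g →ₗ[ℝ] g)
    (hbskew : ∀ a b : g, bracket a b = -bracket b a)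
    (hjacobi : ∀ a b c : g,
      bracket a (bracket b c) = bracket (bracket a b) c + bracket b (bracket a c))
    (hinv : ∀ a b c : g, ⟪bracket a b, c⟫_ℝ + ⟪b, bracket a c⟫_ℝ = 0)
    (e : OrthonormalBasis ι ℝ g)
    (ρ : g →ₗ[ℝ] (V →L[ℂ] V))
    (hrep : ∀ a b : g, ρ (bracket a b) = ρ a ∘L ρ b - ρ b ∘L ρ a)
    (hanti : ∀ (a : g) (v w : V), ⟪(ρ a) v, w⟫_ℂ = -⟪v, (ρ a) w⟫_ℂ)
    (bbrk : V → V → g)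
    (hbbrk : ∀ v w : V, bbrk v w =
      ∑ A, ((1 / 2 : ℝ) * (⟪(ρ (e A)) v, w⟫_ℂ + ⟪w, (ρ (e A)) v⟫_ℂ).re) • e A)
    (Aconn : Spacetime → Fin 3 → g) (X : Spacetime → Fin 3 → ℝ)
    (φ₁ φ₂ : Spacetime → V)
    (hφ₁ : Differentiable ℝ φ₁) (hφ₂ : Differentiable ℝ φ₂) :
    (∀ v w : V, bbrk v w = -bbrk w v) ∧
    (∀ x : Spacetime,
      fderiv ℝ (fun y => bbrk (φ₁ y) (φ₂ y)) x (X x) +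
          bracket (∑ μ, X x μ • Aconn x μ) (bbrk (φ₁ x) (φ₂ x)) =
        bbrk (fderiv ℝ φ₁ x (X x) + (ρ (∑ μ, X x μ • Aconn x μ)) (φ₁ x)) (φ₂ x) +
          bbrk (φ₁ x) (fderiv ℝ φ₂ x (X x) + (ρ (∑ μ, X x μ • Aconn x μ)) (φ₂ x))) :=
  stmt13_general bracket hinv e ρ hrep hanti bbrk hbbrk Aconn X φ₁ φ₂ hφ₁ hφ₂
end
end

section
/- Commutation of boosts with the covariant Klein–Gordon operator under a Chern–Simons constraint: suppose F = ⋆J for a g-valued 1-form J (Hodge star with respect to the Minkowski metric on R^{1+2}). Then for any V-valued function φ and Killing vector field Z, with Z^A φ := D_Z φ and □_A = D^μD_μ: [Z^A, □_A] φ = ι_Z ⋆ D(J ∧ φ) − ι_Z ⋆ (J ∧ Dφ) − ⋆(J ∧ φ ∧ dZ^♭). -/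
noncomputable section

section Infra

local notation "ee" => fun (μ : Fin 3) => (Pi.single μ 1 : Spacetime)

variable {W : Type*} [NormedAddCommGroup W] [NormedSpace ℝ W]

lemma eta_ne_zero (c : Fin 3) : eta c ≠ 0 := by unfold eta; split <;> norm_num

lemma eta_sq (c : Fin 3) : eta c * eta c = 1 := by unfold eta; split <;> norm_num

/-- Schwarz symmetry of second derivatives. -/
lemma schwarz {f : Spacetime → W} (hf : ContDiff ℝ (⊤ : ℕ∞) f) (x : Spacetime) (a b : Spacetime) :
    fderiv ℝ (fun y => fderiv ℝ f y a) x b = fderiv ℝ (fun y => fderiv ℝ f y b) x a := by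
  have hdf : Differentiable ℝ f := hf.differentiable (by simp)
  have hdf' : Differentiable ℝ (fderiv ℝ f) :=
    (hf.fderiv_right (m := (⊤ : ℕ∞)) (by simp)).differentiable (by simp)
  have key := second_derivative_symmetric (f'' := fderiv ℝ (fderiv ℝ f) x)
    (fun y => (hdf y).hasFDerivAt) ((hdf' x).hasFDerivAt) a b
  have h1 : ∀ v : Spacetime, fderiv ℝ (fun y => fderiv ℝ f y v) x
      = (fderiv ℝ (fderiv ℝ f) x).flip v := by
    intro v
    have := fderiv_clm_apply (c := fderiv ℝ f) (u := fun _ => v) (hdf' x)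
      (differentiableAt_const v)
    simpa using this
  rw [h1 a, h1 b]
  simpa using key.symm

/-- Smoothness of a directional derivative. -/
lemma contDiff_dderiv {f : Spacetime → W} (hf : ContDiff ℝ (⊤ : ℕ∞) f) (v : Spacetime) :
    ContDiff ℝ (⊤ : ℕ∞) (fun y => fderiv ℝ f y v) :=
  (hf.fderiv_right (m := (⊤ : ℕ∞)) (by simp)).clm_apply contDiff_const

end Infra
section Killing

/-- Second derivatives of a Killing field vanish. -/
lemma killing_snd {Z : Spacetime → Fin 3 → ℝ}
    (hZs : ∀ μ, ContDiff ℝ (⊤ : ℕ∞) fun y => Z y μ) (hZ : IsKilling Z)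
    (x : Spacetime) (a b c : Fin 3) :
    fderiv ℝ (fun y => fderiv ℝ (fun z => Z z c) y (Pi.single a 1)) x (Pi.single b 1) = 0 := by
  set S : Fin 3 → Fin 3 → Fin 3 → ℝ := fun a b c =>
    fderiv ℝ (fun y => fderiv ℝ (fun z => Z z c) y (Pi.single a 1)) x (Pi.single b 1) with hS
  have hsym : ∀ a b c, S a b c = S b a c := by
    intro a b c; exact schwarz (hZs c) x _ _
  -- differentiate the Killing identity
  have hk : ∀ a d b : Fin 3, eta b * S a d b + eta a * S b d a = 0 := by
    intro a d b
    have hzero : (fun y => eta b * fderiv ℝ (fun z => Z z b) y (Pi.single a 1)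
        + eta a * fderiv ℝ (fun z => Z z a) y (Pi.single b 1)) = fun _ => (0 : ℝ) := by
      funext y; exact hZ y a b
    have hdiff : ∀ (a b : Fin 3), DifferentiableAt ℝ
        (fun y => fderiv ℝ (fun z => Z z b) y (Pi.single a 1)) x :=
      fun a b => ((contDiff_dderiv (hZs b) _).differentiable (by simp)) x
    have := congrArg (fun g => fderiv ℝ g x (Pi.single d 1)) hzero
    simp only [fderiv_fun_const, Pi.zero_apply, ContinuousLinearMap.zero_apply] at this
    rw [fderiv_fun_add ((hdiff a b).const_mul _) ((hdiff b a).const_mul _)] at this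
    rw [fderiv_const_mul (hdiff a b), fderiv_const_mul (hdiff b a)] at this
    simpa [hS] using this
  have key : eta c * S a b c = 0 := by
    have e1 := hk a b c
    have e2 := hk c b a
    have e3 := hk b c a
    have e4 := hk a c b
    have e5 := hk c a b
    have e6 := hk b a c
    have s1 := hsym c b a
    have s2 := hsym a c b
    have s3 := hsym b a c
    linear_combination (e1 - eta a * s1 - e3 + eta b * s2 + e5 - eta c * s3) / 2
  have hc := eta_ne_zero c
  exact by
    have := mul_eq_zero.mp key
    tauto

end Killing
section CovInfra

variable {V : Type*} [NormedAddCommGroup V] [NormedSpace ℂ V]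

/-- restriction of scalars as a CLM -/
def RS : (V →L[ℂ] V) →L[ℝ] (V →L[ℝ] V) := ContinuousLinearMap.restrictScalarsL ℂ V V ℝ ℝ

lemma RS_apply (L : V →L[ℂ] V) (v : V) : RS L v = L v := rfl

lemma capply_contDiff {c : Spacetime → V →L[ℂ] V} {u : Spacetime → V}
    (hc : ContDiff ℝ (⊤ : ℕ∞) c) (hu : ContDiff ℝ (⊤ : ℕ∞) u) :
    ContDiff ℝ (⊤ : ℕ∞) (fun y => c y (u y)) := by
  have h := ((RS (V := V)).contDiff.comp hc).clm_apply hu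
  simpa [RS_apply, Function.comp] using h

lemma fderiv_capply {c : Spacetime → V →L[ℂ] V} {u : Spacetime → V}
    (hc : ContDiff ℝ (⊤ : ℕ∞) c) (x : Spacetime) (hu : DifferentiableAt ℝ u x) (v : Spacetime) :
    fderiv ℝ (fun y => c y (u y)) x v = fderiv ℝ c x v (u x) + c x (fderiv ℝ u x v) := by
  have hc' : DifferentiableAt ℝ (fun y => RS (c y)) x :=
    ((RS (V := V)).contDiff.comp hc).differentiable (by simp) x
  have heq : (fun y => c y (u y)) = fun y => (RS (c y)) (u y) := rfl
  rw [heq, fderiv_clm_apply hc' hu]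
  have hder : fderiv ℝ (fun y => RS (c y)) x =
      (RS (V := V)).comp (fderiv ℝ c x) :=
    ((RS (V := V)).hasFDerivAt.comp x
      ((hc.differentiable (by simp) x).hasFDerivAt)).fderiv
  rw [hder]
  simp only [ContinuousLinearMap.add_apply, ContinuousLinearMap.flip_apply,
    ContinuousLinearMap.comp_apply, RS_apply]
  exact add_comm _ _

end CovInfra
section Covd1

variable {V : Type*} [NormedAddCommGroup V] [NormedSpace ℂ V]
variable {A : Form (V →L[ℂ] V) 1}

lemma covd1_contDiff (hA : ∀ w, ContDiff ℝ (⊤ : ℕ∞) fun y => A y w) {ψ : Spacetime → V}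
    (hψ : ContDiff ℝ (⊤ : ℕ∞) ψ) (μ : Fin 3) : ContDiff ℝ (⊤ : ℕ∞) (covd1 A μ ψ) :=
  (contDiff_dderiv hψ _).add (capply_contDiff (hA ![μ]) hψ)

lemma covd1_add {f g : Spacetime → V} (x : Spacetime) (hf : DifferentiableAt ℝ f x)
    (hg : DifferentiableAt ℝ g x) (μ : Fin 3) :
    covd1 A μ (fun y => f y + g y) x = covd1 A μ f x + covd1 A μ g x := by
  simp only [covd1, fderiv_fun_add hf hg, ContinuousLinearMap.add_apply, map_add]
  abel

lemma covd1_neg {f : Spacetime → V} (x : Spacetime) (μ : Fin 3) :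
    covd1 A μ (fun y => -(f y)) x = -covd1 A μ f x := by
  simp only [covd1, fderiv_fun_neg, ContinuousLinearMap.neg_apply, map_neg, neg_add]

lemma covd1_zero (x : Spacetime) (μ : Fin 3) :
    covd1 A μ (fun _ => (0 : V)) x = 0 := by
  simp [covd1]

lemma covd1_smul {c : Spacetime → ℝ} {f : Spacetime → V} (x : Spacetime)
    (hc : DifferentiableAt ℝ c x) (hf : DifferentiableAt ℝ f x) (μ : Fin 3) :
    covd1 A μ (fun y => c y • f y) x
      = fderiv ℝ c x (Pi.single μ 1) • f x + c x • covd1 A μ f x := by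
  simp only [covd1, fderiv_fun_smul hc hf, ContinuousLinearMap.add_apply,
    ContinuousLinearMap.smul_apply, ContinuousLinearMap.smulRight_apply,
    ContinuousLinearMap.map_smul_of_tower, smul_add]
  abel

lemma covd1_const_smul {r : ℝ} {f : Spacetime → V} (x : Spacetime)
    (hf : DifferentiableAt ℝ f x) (μ : Fin 3) :
    covd1 A μ (fun y => r • f y) x = r • covd1 A μ f x := by
  simp only [covd1, fderiv_fun_const_smul hf, ContinuousLinearMap.smul_apply,
    ContinuousLinearMap.map_smul_of_tower, smul_add]

lemma covd1_sum {ι : Type*} (s : Finset ι) (f : ι → Spacetime → V) (x : Spacetime)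
    (hf : ∀ i ∈ s, DifferentiableAt ℝ (f i) x) (μ : Fin 3) :
    covd1 A μ (fun y => ∑ i ∈ s, f i y) x = ∑ i ∈ s, covd1 A μ (f i) x := by
  simp only [covd1, fderiv_fun_sum hf, ContinuousLinearMap.sum_apply, map_sum]
  rw [Finset.sum_add_distrib]

/-- commutator of covariant derivatives is the curvature -/
lemma covd1_comm (hA : ∀ w, ContDiff ℝ (⊤ : ℕ∞) fun y => A y w) {ψ : Spacetime → V}
    (hψ : ContDiff ℝ (⊤ : ℕ∞) ψ) (x : Spacetime) (a b : Fin 3) :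
    covd1 A a (covd1 A b ψ) x - covd1 A b (covd1 A a ψ) x
      = curv A x ![a, b] (ψ x) := by
  have hψd : Differentiable ℝ ψ := hψ.differentiable (by simp)
  have hder : ∀ (a b : Fin 3),
      fderiv ℝ (covd1 A b ψ) x (Pi.single a 1)
        = fderiv ℝ (fun y => fderiv ℝ ψ y (Pi.single b 1)) x (Pi.single a 1)
          + (fderiv ℝ (fun y => A y ![b]) x (Pi.single a 1)) (ψ x)
          + A x ![b] (fderiv ℝ ψ x (Pi.single a 1)) := by
    intro a b
    have h1 : DifferentiableAt ℝ (fun y => fderiv ℝ ψ y (Pi.single b 1)) x :=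
      ((contDiff_dderiv hψ _).differentiable (by simp)) x
    have h2 : DifferentiableAt ℝ (fun y => A y ![b] (ψ y)) x :=
      ((capply_contDiff (hA ![b]) hψ).differentiable (by simp)) x
    have : covd1 A b ψ = fun y => fderiv ℝ ψ y (Pi.single b 1) + A y ![b] (ψ y) := rfl
    rw [this, fderiv_fun_add h1 h2, ContinuousLinearMap.add_apply,
      fderiv_capply (hA ![b]) x (hψd x), add_assoc]
  simp only [covd1, hder]
  rw [schwarz hψ x (Pi.single b 1) (Pi.single a 1)]
  simp only [curv, Matrix.cons_val_zero, Matrix.cons_val_one, Matrix.head_cons,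
    ContinuousLinearMap.sub_apply, ContinuousLinearMap.add_apply,
    ContinuousLinearMap.comp_apply, map_add]
  abel

end Covd1
section CovMore

set_option synthInstance.maxHeartbeats 1000000
set_option maxHeartbeats 1000000

variable {V : Type*} [NormedAddCommGroup V] [NormedSpace ℂ V]
variable {A : Form (V →L[ℂ] V) 1}

lemma single_eq_ite (ν : Fin 3) :
    (Pi.single ν 1 : Spacetime) = fun j => if ν = j then (1:ℝ) else 0 := by
  funext j
  rw [Pi.single_apply]
  exact if_congr eq_comm rfl rfl

lemma covDvec_eq {Z : Spacetime → Fin 3 → ℝ} {ψ : Spacetime → V} (x : Spacetime)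
    (hψ : DifferentiableAt ℝ ψ x) :
    covDvec A Z ψ x = ∑ ν : Fin 3, Z x ν • covd1 A ν ψ x := by
  have hz : Z x = ∑ ν : Fin 3, Z x ν • (Pi.single ν 1 : Spacetime) := by
    conv_lhs => rw [pi_eq_sum_univ (Z x)]
    exact Finset.sum_congr rfl fun ν _ => by rw [single_eq_ite]
  have h1 : fderiv ℝ ψ x (Z x) = ∑ ν : Fin 3, Z x ν • fderiv ℝ ψ x (Pi.single ν 1) := by
    conv_lhs => rw [hz]
    simp [map_sum, map_smul]
  show fderiv ℝ ψ x (Z x) + (∑ μ : Fin 3, Z x μ • A x ![μ]) (ψ x) = _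
  rw [h1]
  simp only [ContinuousLinearMap.sum_apply, ContinuousLinearMap.smul_apply, covd1, smul_add]
  rw [← Finset.sum_add_distrib]

lemma curv_apply_eq (x : Spacetime) (w : Fin 2 → Fin 3) (v : V) :
    curv A x w v
      = (fderiv ℝ (fun z => A z ![w 1]) x (Pi.single (w 0) 1)) v
        - (fderiv ℝ (fun z => A z ![w 0]) x (Pi.single (w 1) 1)) v
        + ((A x ![w 0]) ((A x ![w 1]) v) - (A x ![w 1]) ((A x ![w 0]) v)) := by
  simp [curv, ContinuousLinearMap.sub_apply, ContinuousLinearMap.add_apply,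
    ContinuousLinearMap.comp_apply]

lemma curvApply_contDiff (hA : ∀ w, ContDiff ℝ (⊤ : ℕ∞) fun y => A y w) {ψ : Spacetime → V}
    (hψ : ContDiff ℝ (⊤ : ℕ∞) ψ) (w : Fin 2 → Fin 3) :
    ContDiff ℝ (⊤ : ℕ∞) (fun y => curv A y w (ψ y)) := by
  have heq : (fun y => curv A y w (ψ y))
      = fun y => (fderiv ℝ (fun z => A z ![w 1]) y (Pi.single (w 0) 1)) (ψ y)
        - (fderiv ℝ (fun z => A z ![w 0]) y (Pi.single (w 1) 1)) (ψ y)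
        + ((A y ![w 0]) ((A y ![w 1]) (ψ y)) - (A y ![w 1]) ((A y ![w 0]) (ψ y))) := by
    funext y; exact curv_apply_eq y w (ψ y)
  rw [heq]
  exact (((capply_contDiff (contDiff_dderiv (hA ![w 1]) _) hψ).sub
    (capply_contDiff (contDiff_dderiv (hA ![w 0]) _) hψ)).add
    ((capply_contDiff (hA ![w 0]) (capply_contDiff (hA ![w 1]) hψ)).sub
      (capply_contDiff (hA ![w 1]) (capply_contDiff (hA ![w 0]) hψ))))

lemma curv_swap (x : Spacetime) (a b : Fin 3) :
    curv A x ![b, a] = -curv A x ![a, b] := by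
  simp only [curv, Matrix.cons_val_zero, Matrix.cons_val_one, Matrix.head_cons]
  abel

lemma curv_diag (x : Spacetime) (a : Fin 3) : curv A x ![a, a] = 0 := by
  simp only [curv, Matrix.cons_val_zero, Matrix.cons_val_one, Matrix.head_cons]
  abel

end CovMore
section LHS

set_option maxHeartbeats 2000000

variable {V : Type*} [NormedAddCommGroup V] [NormedSpace ℂ V]
variable {A : Form (V →L[ℂ] V) 1}

lemma LHS_eq (hA : ∀ w, ContDiff ℝ (⊤ : ℕ∞) fun y => A y w)
    {Z : Spacetime → Fin 3 → ℝ} (hZs : ∀ μ, ContDiff ℝ (⊤ : ℕ∞) fun y => Z y μ)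
    (hZ : IsKilling Z) {φ : Spacetime → V} (hφ : ContDiff ℝ (⊤ : ℕ∞) φ) (x : Spacetime) :
    covDvec A Z (boxA A φ) x - boxA A (covDvec A Z φ) x
      = (∑ μ : Fin 3, ∑ ν : Fin 3, (Z x ν * eta μ) •
          (covd1 A μ (fun y => curv A y ![ν, μ] (φ y)) x
            + curv A x ![ν, μ] (covd1 A μ φ x)))
        - ∑ μ : Fin 3, ∑ ν : Fin 3,
            (eta μ * (2 * fderiv ℝ (fun y => Z y ν) x (Pi.single μ 1))) •
              covd1 A μ (covd1 A ν φ) x := by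
  have hφ1 : ∀ ν, ContDiff ℝ (⊤ : ℕ∞) (covd1 A ν φ) := fun ν => covd1_contDiff hA hφ ν
  have hφ2 : ∀ μ ν, ContDiff ℝ (⊤ : ℕ∞) (covd1 A μ (covd1 A ν φ)) :=
    fun μ ν => covd1_contDiff hA (hφ1 ν) μ
  have hG : ∀ ν μ, ContDiff ℝ (⊤ : ℕ∞) (fun y => curv A y ![ν, μ] (φ y)) :=
    fun ν μ => curvApply_contDiff hA hφ ![ν, μ]
  have hboxf : boxA A φ = fun y => ∑ μ : Fin 3, eta μ • covd1 A μ (covd1 A μ φ) y := rfl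
  have hbox_smooth : ContDiff ℝ (⊤ : ℕ∞) (boxA A φ) := by
    rw [hboxf]; exact ContDiff.sum fun μ _ => (hφ2 μ μ).const_smul _
  have hc1 : ∀ ν μ, covd1 A ν (covd1 A μ (covd1 A μ φ)) x
      = covd1 A μ (covd1 A μ (covd1 A ν φ)) x
        + covd1 A μ (fun y => curv A y ![ν, μ] (φ y)) x
        + curv A x ![ν, μ] (covd1 A μ φ x) := by
    intro ν μ
    have i := covd1_comm hA (hφ1 μ) x ν μ
    have ii : covd1 A ν (covd1 A μ φ)
        = fun y => covd1 A μ (covd1 A ν φ) y + curv A y ![ν, μ] (φ y) := by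
      funext y
      rw [← covd1_comm hA hφ y ν μ]
      abel
    have iM : covd1 A μ (covd1 A ν (covd1 A μ φ)) x
        = covd1 A μ (covd1 A μ (covd1 A ν φ)) x
          + covd1 A μ (fun y => curv A y ![ν, μ] (φ y)) x := by
      rw [ii]
      exact covd1_add x ((hφ2 μ ν).differentiable (by simp) x)
        ((hG ν μ).differentiable (by simp) x) μ
    have hL := sub_eq_iff_eq_add.mp i
    rw [hL, iM]
    abel
  -- first piece
  have hB1 : covDvec A Z (boxA A φ) x
      = ∑ ν : Fin 3, Z x ν • ∑ μ : Fin 3, eta μ •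
          (covd1 A μ (covd1 A μ (covd1 A ν φ)) x
            + covd1 A μ (fun y => curv A y ![ν, μ] (φ y)) x
            + curv A x ![ν, μ] (covd1 A μ φ x)) := by
    rw [covDvec_eq x (hbox_smooth.differentiable (by simp) x)]
    refine Finset.sum_congr rfl fun ν _ => ?_
    congr 1
    rw [hboxf]
    rw [covd1_sum Finset.univ _ x
      (fun μ _ => (((hφ2 μ μ).const_smul (eta μ)).differentiable (by simp) x)) ν]
    refine Finset.sum_congr rfl fun μ _ => ?_
    rw [covd1_const_smul x ((hφ2 μ μ).differentiable (by simp) x) ν, hc1 ν μ]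
  -- second piece
  have hcv : covDvec A Z φ = fun y => ∑ ν : Fin 3, Z y ν • covd1 A ν φ y :=
    funext fun y => covDvec_eq y ((hφ.differentiable (by simp)) y)
  have hin : ∀ μ, covd1 A μ (covDvec A Z φ)
      = fun y => ∑ ν : Fin 3,
          (fderiv ℝ (fun z => Z z ν) y (Pi.single μ 1) • covd1 A ν φ y
            + Z y ν • covd1 A μ (covd1 A ν φ) y) := by
    intro μ; funext y
    rw [hcv, covd1_sum Finset.univ (fun ν y => Z y ν • covd1 A ν φ y) y
      (fun ν _ => (((hZs ν).smul (hφ1 ν)).differentiable (by simp) y)) μ]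
    exact Finset.sum_congr rfl fun ν _ =>
      covd1_smul y ((hZs ν).differentiable (by simp) y) ((hφ1 ν).differentiable (by simp) y) μ
  have hout : ∀ μ, covd1 A μ (covd1 A μ (covDvec A Z φ)) x
      = ∑ ν : Fin 3,
          (fderiv ℝ (fun z => Z z ν) x (Pi.single μ 1) • covd1 A μ (covd1 A ν φ) x
            + (fderiv ℝ (fun z => Z z ν) x (Pi.single μ 1) • covd1 A μ (covd1 A ν φ) x
              + Z x ν • covd1 A μ (covd1 A μ (covd1 A ν φ)) x)) := by
    intro μ
    rw [hin μ]
    have hd1 : ∀ ν : Fin 3, ContDiff ℝ (⊤ : ℕ∞) (fun y =>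
        fderiv ℝ (fun z => Z z ν) y (Pi.single μ 1) • covd1 A ν φ y) :=
      fun ν => (contDiff_dderiv (hZs ν) _).smul (hφ1 ν)
    have hd2 : ∀ ν' ν : Fin 3, ContDiff ℝ (⊤ : ℕ∞) (fun y => Z y ν • covd1 A ν' (covd1 A ν φ) y) :=
      fun ν' ν => (hZs ν).smul (hφ2 ν' ν)
    rw [covd1_sum Finset.univ _ x
      (fun ν _ => (((hd1 ν).add (hd2 μ ν)).differentiable (by simp) x)) μ]
    refine Finset.sum_congr rfl fun ν _ => ?_
    rw [covd1_add x ((hd1 ν).differentiable (by simp) x) ((hd2 μ ν).differentiable (by simp) x) μ,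
      covd1_smul x (((contDiff_dderiv (hZs ν) _)).differentiable (by simp) x)
        ((hφ1 ν).differentiable (by simp) x) μ,
      covd1_smul x ((hZs ν).differentiable (by simp) x)
        ((hφ2 μ ν).differentiable (by simp) x) μ,
      killing_snd hZs hZ x μ μ ν, zero_smul, zero_add]
  have hB2 : boxA A (covDvec A Z φ) x
      = ∑ μ : Fin 3, eta μ • ∑ ν : Fin 3,
          (fderiv ℝ (fun z => Z z ν) x (Pi.single μ 1) • covd1 A μ (covd1 A ν φ) x
            + (fderiv ℝ (fun z => Z z ν) x (Pi.single μ 1) • covd1 A μ (covd1 A ν φ) x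
              + Z x ν • covd1 A μ (covd1 A μ (covd1 A ν φ)) x)) := by
    refine Finset.sum_congr rfl fun μ _ => ?_
    rw [hout μ]
  rw [hB1, hB2]
  simp only [Fin.sum_univ_three, smul_add, smul_smul]
  module

end LHS
section Comb

variable {M : Type*} [AddCommMonoid M]

lemma sum_fn_succ {n : ℕ} (g : (Fin (n+1) → Fin 3) → M) :
    ∑ f : Fin (n+1) → Fin 3, g f = ∑ a : Fin 3, ∑ f0 : Fin n → Fin 3, g (Fin.cons a f0) := by
  rw [← Equiv.sum_comp (Fin.consEquiv fun _ => Fin 3) g, Fintype.sum_prod_type]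
  rfl

lemma sum_fn0 (g : (Fin 0 → Fin 3) → M) : ∑ f, g f = g Fin.elim0 := by
  rw [Fintype.sum_unique]
  exact congrArg g (Subsingleton.elim _ _)

lemma sum_fn1 (g : (Fin 1 → Fin 3) → M) : ∑ f, g f = ∑ a : Fin 3, g ![a] := by
  rw [sum_fn_succ]
  refine Finset.sum_congr rfl fun a _ => ?_
  rw [sum_fn0 (fun f0 => g (Fin.cons a f0))]
  exact congrArg g (funext fun i => by fin_cases i <;> rfl)

lemma sum_fn2 (g : (Fin 2 → Fin 3) → M) : ∑ f, g f = ∑ a : Fin 3, ∑ b : Fin 3, g ![a, b] := by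
  rw [sum_fn_succ]
  refine Finset.sum_congr rfl fun a _ => ?_
  rw [sum_fn1 (fun f0 => g (Fin.cons a f0))]
  exact Finset.sum_congr rfl fun b _ => congrArg g (funext fun i => by fin_cases i <;> rfl)

lemma sum_fn3 (g : (Fin 3 → Fin 3) → M) :
    ∑ f, g f = ∑ a : Fin 3, ∑ b : Fin 3, ∑ c : Fin 3, g ![a, b, c] := by
  rw [sum_fn_succ]
  refine Finset.sum_congr rfl fun a _ => ?_
  rw [sum_fn2 (fun f0 => g (Fin.cons a f0))]
  refine Finset.sum_congr rfl fun b _ => Finset.sum_congr rfl fun c _ =>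
    congrArg g (funext fun i => by fin_cases i <;> rfl)

lemma eps_not {n : ℕ} (f : Fin n → Fin n) (h : ¬ Function.Bijective f) : eps f = 0 :=
  dif_neg h

lemma eps_perm {n : ℕ} (σ : Equiv.Perm (Fin n)) (f : Fin n → Fin n) (h : f = ⇑σ) :
    eps f = ((Equiv.Perm.sign σ : ℤ) : ℝ) := by
  subst h
  rw [eps, dif_pos σ.bijective]
  have : Equiv.ofBijective ⇑σ σ.bijective = σ := Equiv.ext fun i => rfl
  rw [this]

lemma perm3_univ : (Finset.univ : Finset (Equiv.Perm (Fin 3))) =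
    {1, Equiv.swap 0 1, Equiv.swap 0 2, Equiv.swap 1 2,
     Equiv.swap 0 1 * Equiv.swap 1 2, Equiv.swap 0 2 * Equiv.swap 1 2} := by decide

lemma sum_perm3 (g : Equiv.Perm (Fin 3) → M) :
    ∑ σ : Equiv.Perm (Fin 3), g σ =
      g 1 + g (Equiv.swap 0 1) + g (Equiv.swap 0 2) + g (Equiv.swap 1 2)
        + g (Equiv.swap 0 1 * Equiv.swap 1 2) + g (Equiv.swap 0 2 * Equiv.swap 1 2) := by
  rw [perm3_univ]
  rw [Finset.sum_insert (by decide), Finset.sum_insert (by decide),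
    Finset.sum_insert (by decide), Finset.sum_insert (by decide),
    Finset.sum_insert (by decide), Finset.sum_singleton]
  abel

end Comb
section EpsVals

lemma eps_000 : eps ![0,0,0] = 0 := eps_not _ (by decide)

lemma eps_001 : eps ![0,0,1] = 0 := eps_not _ (by decide)

lemma eps_002 : eps ![0,0,2] = 0 := eps_not _ (by decide)

lemma eps_010 : eps ![0,1,0] = 0 := eps_not _ (by decide)

lemma eps_011 : eps ![0,1,1] = 0 := eps_not _ (by decide)

lemma eps_012 : eps ![0,1,2] = 1 := by
  rw [eps_perm (1) _ (by decide)]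
  norm_num [show Equiv.Perm.sign (1 : Equiv.Perm (Fin 3)) = 1 from by decide]

lemma eps_020 : eps ![0,2,0] = 0 := eps_not _ (by decide)

lemma eps_021 : eps ![0,2,1] = -1 := by
  rw [eps_perm (Equiv.swap 1 2) _ (by decide)]
  norm_num [show Equiv.Perm.sign (Equiv.swap 1 2 : Equiv.Perm (Fin 3)) = -1 from by decide]

lemma eps_022 : eps ![0,2,2] = 0 := eps_not _ (by decide)

lemma eps_100 : eps ![1,0,0] = 0 := eps_not _ (by decide)

lemma eps_101 : eps ![1,0,1] = 0 := eps_not _ (by decide)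

lemma eps_102 : eps ![1,0,2] = -1 := by
  rw [eps_perm (Equiv.swap 0 1) _ (by decide)]
  norm_num [show Equiv.Perm.sign (Equiv.swap 0 1 : Equiv.Perm (Fin 3)) = -1 from by decide]

lemma eps_110 : eps ![1,1,0] = 0 := eps_not _ (by decide)

lemma eps_111 : eps ![1,1,1] = 0 := eps_not _ (by decide)

lemma eps_112 : eps ![1,1,2] = 0 := eps_not _ (by decide)

lemma eps_120 : eps ![1,2,0] = 1 := by
  rw [eps_perm (Equiv.swap 0 1 * Equiv.swap 1 2) _ (by decide)]
  norm_num [show Equiv.Perm.sign (Equiv.swap 0 1 * Equiv.swap 1 2 : Equiv.Perm (Fin 3)) = 1 from by decide]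

lemma eps_121 : eps ![1,2,1] = 0 := eps_not _ (by decide)

lemma eps_122 : eps ![1,2,2] = 0 := eps_not _ (by decide)

lemma eps_200 : eps ![2,0,0] = 0 := eps_not _ (by decide)

lemma eps_201 : eps ![2,0,1] = 1 := by
  rw [eps_perm (Equiv.swap 0 2 * Equiv.swap 1 2) _ (by decide)]
  norm_num [show Equiv.Perm.sign (Equiv.swap 0 2 * Equiv.swap 1 2 : Equiv.Perm (Fin 3)) = 1 from by decide]

lemma eps_202 : eps ![2,0,2] = 0 := eps_not _ (by decide)

lemma eps_210 : eps ![2,1,0] = -1 := by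
  rw [eps_perm (Equiv.swap 0 2) _ (by decide)]
  norm_num [show Equiv.Perm.sign (Equiv.swap 0 2 : Equiv.Perm (Fin 3)) = -1 from by decide]

lemma eps_211 : eps ![2,1,1] = 0 := eps_not _ (by decide)

lemma eps_212 : eps ![2,1,2] = 0 := eps_not _ (by decide)

lemma eps_220 : eps ![2,2,0] = 0 := eps_not _ (by decide)

lemma eps_221 : eps ![2,2,1] = 0 := eps_not _ (by decide)

lemma eps_222 : eps ![2,2,2] = 0 := eps_not _ (by decide)

end EpsVals
section EpsApp

lemma eps_app1 (a b c : Fin 3) (hc : (3:ℕ) = 1 + (3 - 1)) :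
    eps (Fin.append ![a] ![b, c] ∘ Fin.cast hc) = eps ![a, b, c] := by
  congr 1
  funext i
  fin_cases i <;> rfl

lemma eps_app2 (a b c : Fin 3) (hc : (3:ℕ) = 2 + (3 - 2)) :
    eps (Fin.append ![a, b] (Fin.cons c Fin.elim0) ∘ Fin.cast hc) = eps ![a, b, c] := by
  congr 1
  funext i
  fin_cases i <;> rfl

lemma eps_app3 (a b c : Fin 3) (hc : (3:ℕ) = 3 + (3 - 3)) :
    eps (Fin.append ![a, b, c] Fin.elim0 ∘ Fin.cast hc) = eps ![a, b, c] := by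
  congr 1
  funext i
  fin_cases i <;> rfl


lemma eps_app1' (a b c : Fin 3) :
    eps (Fin.append ![a] (![b, c] : Fin 2 → Fin 3)) = eps ![a, b, c] := by
  congr 1; funext i; fin_cases i <;> rfl

lemma eps_app2' (a b c : Fin 3) :
    eps (Fin.append ![a, b] (Fin.cons c Fin.elim0)) = eps ![a, b, c] := by
  congr 1; funext i; fin_cases i <;> rfl

lemma eps_app3' (a b c : Fin 3) :
    eps (Fin.append ![a, b, c] Fin.elim0) = eps ![a, b, c] := by
  congr 1; funext i; fin_cases i <;> rfl

end EpsApp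
section RHSstruct

set_option maxHeartbeats 1000000

variable {V : Type*} [NormedAddCommGroup V] [NormedSpace ℂ V]
variable {A J : Form (V →L[ℂ] V) 1}

lemma wedgeA_phi (φ : Spacetime → V) :
    wedgeA J (fun y (_ : Fin 0 → Fin 3) => φ y) = fun y w => J y ![w 0] (φ y) := by
  funext y w
  simp [wedgeA]

lemma covD_phi (φ : Spacetime → V) :
    covD A (fun y (_ : Fin 0 → Fin 3) => φ y) = fun y w => covd1 A (w 0) φ y := by
  funext y w
  simp [covD, extd, wedgeA, covd1]

lemma covD_pair (c : Fin 3 → Spacetime → V) (x : Spacetime) (a b : Fin 3) :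
    covD A (fun y w => c (w 0) y) x ![a, b]
      = covd1 A a (c b) x - covd1 A b (c a) x := by
  have h0 : (![a,b] ∘ Fin.succAbove 0) 0 = b := rfl
  have h1 : (![a,b] ∘ Fin.succAbove 1) 0 = a := rfl
  simp [covD, extd, wedgeA, covd1, Fin.sum_univ_two, h0, h1]
  abel

lemma wedgeA_pair (c : Fin 3 → Spacetime → V) (x : Spacetime) (a b : Fin 3) :
    wedgeA J (fun y w => c (w 0) y) x ![a, b]
      = J x ![a] (c b x) - J x ![b] (c a x) := by
  have h0 : (![a,b] ∘ Fin.succAbove 0) 0 = b := rfl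
  have h1 : (![a,b] ∘ Fin.succAbove 1) 0 = a := rfl
  simp [wedgeA, Fin.sum_univ_two, h0, h1]
  abel

lemma extd_flat {Z : Spacetime → Fin 3 → ℝ} (hZs : ∀ μ, ContDiff ℝ (⊤ : ℕ∞) fun y => Z y μ)
    (x : Spacetime) (a b : Fin 3) :
    extd (flat Z) x ![a, b]
      = eta b * fderiv ℝ (fun y => Z y b) x (Pi.single a 1)
        - eta a * fderiv ℝ (fun y => Z y a) x (Pi.single b 1) := by
  have h0 : (![a,b] ∘ Fin.succAbove 0) 0 = b := rfl
  have h1 : (![a,b] ∘ Fin.succAbove 1) 0 = a := rfl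
  have hfl : ∀ (c : Fin 3), (fun y => flat Z y ![c]) = fun y => eta c * Z y c := by
    intro c; funext y; simp [flat]
  have hd : ∀ c : Fin 3, DifferentiableAt ℝ (fun y => Z y c) x :=
    fun c => (hZs c).differentiable (by simp) x
  unfold extd
  show (∑ i : Fin 2, ((-1:ℝ)) ^ (i:ℕ) •
      fderiv ℝ (fun y => flat Z y (![a,b] ∘ i.succAbove)) x (Pi.single (![a,b] i) 1)) = _
  rw [Fin.sum_univ_two]
  have e0 : (fun y => flat Z y (![a,b] ∘ Fin.succAbove 0)) = fun y => eta b * Z y b := by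
    funext y; simp [flat, h0]
  have e1 : (fun y => flat Z y (![a,b] ∘ Fin.succAbove 1)) = fun y => eta a * Z y a := by
    funext y; simp [flat, h1]
  rw [e0, e1, fderiv_const_mul (hd b), fderiv_const_mul (hd a)]
  simp [smul_eq_mul]
  ring

lemma iprod_hodge2 (Z : Spacetime → Fin 3 → ℝ) (v : Form V 2) (x : Spacetime)
    (h : (2:ℕ) ≤ 3) :
    iprod (k := 0) Z (hodge 2 h v) x Fin.elim0
      = ∑ μ : Fin 3, Z x μ • (2:ℝ)⁻¹ •
          ∑ a : Fin 3, ∑ b : Fin 3, ((eta a * eta b) * eps ![a, b, μ]) • v x ![a, b] := by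
  unfold iprod hodge
  refine Finset.sum_congr rfl fun μ _ => ?_
  congr 1
  rw [sum_fn2 (M := V) (fun ν => ((∏ i, eta (ν i)) * eps (Fin.append ν (Fin.cons μ Fin.elim0)
    ∘ Fin.cast (by omega : (3:ℕ) = 2 + (3 - 2)))) • v x ν)]
  norm_num [Nat.factorial]
  refine Finset.sum_congr rfl fun a _ => Finset.sum_congr rfl fun b _ => ?_
  rw [eps_app2']

lemma hodge3_elim (v : Form V 3) (x : Spacetime) (h : (3:ℕ) ≤ 3) :
    hodge 3 h v x Fin.elim0
      = (6:ℝ)⁻¹ • ∑ a : Fin 3, ∑ b : Fin 3, ∑ c : Fin 3,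
          ((eta a * eta b * eta c) * eps ![a, b, c]) • v x ![a, b, c] := by
  unfold hodge
  rw [sum_fn3 (M := V) (fun ν => ((∏ i, eta (ν i)) * eps (Fin.append ν Fin.elim0
    ∘ Fin.cast (by omega : (3:ℕ) = 3 + (3 - 3)))) • v x ν)]
  norm_num [Nat.factorial]
  refine Finset.sum_congr rfl fun a _ => Finset.sum_congr rfl fun b _ =>
    Finset.sum_congr rfl fun c _ => ?_
  rw [Fin.prod_univ_three]
  simp [Matrix.cons_val_zero, Matrix.cons_val_one]

end RHSstruct
section W12

variable {V : Type*} [NormedAddCommGroup V] [NormedSpace ℂ V]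

lemma pv_0_0 : (((1 : Equiv.Perm (Fin 3))) : Fin 3 → Fin 3) 0 = 0 := rfl
lemma pv_0_1 : (((1 : Equiv.Perm (Fin 3))) : Fin 3 → Fin 3) 1 = 1 := rfl
lemma pv_0_2 : (((1 : Equiv.Perm (Fin 3))) : Fin 3 → Fin 3) 2 = 2 := rfl
lemma ps_0 : Equiv.Perm.sign ((1 : Equiv.Perm (Fin 3))) = 1 := by decide
lemma pv_1_0 : (((Equiv.swap (0:Fin 3) 1 : Equiv.Perm (Fin 3))) : Fin 3 → Fin 3) 0 = 1 := rfl
lemma pv_1_1 : (((Equiv.swap (0:Fin 3) 1 : Equiv.Perm (Fin 3))) : Fin 3 → Fin 3) 1 = 0 := rfl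
lemma pv_1_2 : (((Equiv.swap (0:Fin 3) 1 : Equiv.Perm (Fin 3))) : Fin 3 → Fin 3) 2 = 2 := rfl
lemma ps_1 : Equiv.Perm.sign ((Equiv.swap (0:Fin 3) 1 : Equiv.Perm (Fin 3))) = -1 := by decide
lemma pv_2_0 : (((Equiv.swap (0:Fin 3) 2 : Equiv.Perm (Fin 3))) : Fin 3 → Fin 3) 0 = 2 := rfl
lemma pv_2_1 : (((Equiv.swap (0:Fin 3) 2 : Equiv.Perm (Fin 3))) : Fin 3 → Fin 3) 1 = 1 := rfl
lemma pv_2_2 : (((Equiv.swap (0:Fin 3) 2 : Equiv.Perm (Fin 3))) : Fin 3 → Fin 3) 2 = 0 := rfl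
lemma ps_2 : Equiv.Perm.sign ((Equiv.swap (0:Fin 3) 2 : Equiv.Perm (Fin 3))) = -1 := by decide
lemma pv_3_0 : (((Equiv.swap (1:Fin 3) 2 : Equiv.Perm (Fin 3))) : Fin 3 → Fin 3) 0 = 0 := rfl
lemma pv_3_1 : (((Equiv.swap (1:Fin 3) 2 : Equiv.Perm (Fin 3))) : Fin 3 → Fin 3) 1 = 2 := rfl
lemma pv_3_2 : (((Equiv.swap (1:Fin 3) 2 : Equiv.Perm (Fin 3))) : Fin 3 → Fin 3) 2 = 1 := rfl
lemma ps_3 : Equiv.Perm.sign ((Equiv.swap (1:Fin 3) 2 : Equiv.Perm (Fin 3))) = -1 := by decide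
lemma pv_4_0 : (((Equiv.swap (0:Fin 3) 1 * Equiv.swap 1 2 : Equiv.Perm (Fin 3))) : Fin 3 → Fin 3) 0 = 1 := rfl
lemma pv_4_1 : (((Equiv.swap (0:Fin 3) 1 * Equiv.swap 1 2 : Equiv.Perm (Fin 3))) : Fin 3 → Fin 3) 1 = 2 := rfl
lemma pv_4_2 : (((Equiv.swap (0:Fin 3) 1 * Equiv.swap 1 2 : Equiv.Perm (Fin 3))) : Fin 3 → Fin 3) 2 = 0 := rfl
lemma ps_4 : Equiv.Perm.sign ((Equiv.swap (0:Fin 3) 1 * Equiv.swap 1 2 : Equiv.Perm (Fin 3))) = 1 := by decide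
lemma pv_5_0 : (((Equiv.swap (0:Fin 3) 2 * Equiv.swap 1 2 : Equiv.Perm (Fin 3))) : Fin 3 → Fin 3) 0 = 2 := rfl
lemma pv_5_1 : (((Equiv.swap (0:Fin 3) 2 * Equiv.swap 1 2 : Equiv.Perm (Fin 3))) : Fin 3 → Fin 3) 1 = 0 := rfl
lemma pv_5_2 : (((Equiv.swap (0:Fin 3) 2 * Equiv.swap 1 2 : Equiv.Perm (Fin 3))) : Fin 3 → Fin 3) 2 = 1 := rfl
lemma ps_5 : Equiv.Perm.sign ((Equiv.swap (0:Fin 3) 2 * Equiv.swap 1 2 : Equiv.Perm (Fin 3))) = 1 := by decide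

lemma wedge12_expand (v : Form V 1) (ω : Form ℝ 2) (x : Spacetime) (a b c : Fin 3) :
    wedge12 v ω x ![a, b, c] = (2:ℝ)⁻¹ • (((ω x ![b, c]) • v x ![a]) + (-(ω x ![a, c]) • v x ![b]) + (-(ω x ![b, a]) • v x ![c]) + (-(ω x ![c, b]) • v x ![a]) + ((ω x ![c, a]) • v x ![b]) + ((ω x ![a, b]) • v x ![c])) := by
  unfold wedge12
  rw [sum_perm3 (M := V) (fun σ => (((Equiv.Perm.sign σ : ℤ) : ℝ)
    * ω x ![(![a,b,c]) (σ 1), (![a,b,c]) (σ 2)]) • v x ![(![a,b,c]) (σ 0)])]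
  simp only [pv_0_0, pv_0_1, pv_0_2, ps_0, pv_1_0, pv_1_1, pv_1_2, ps_1, pv_2_0, pv_2_1, pv_2_2, ps_2, pv_3_0, pv_3_1, pv_3_2, ps_3, pv_4_0, pv_4_1, pv_4_2, ps_4, pv_5_0, pv_5_1, pv_5_2, ps_5]
  norm_num
  rfl


end W12
section Jinv

variable {V : Type*} [NormedAddCommGroup V] [NormedSpace ℂ V]
variable {A J : Form (V →L[ℂ] V) 1}

lemma eta_0 : eta 0 = -1 := rfl
lemma eta_1 : eta 1 = 1 := rfl
lemma eta_2 : eta 2 = 1 := rfl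

lemma hodge1_pair (J : Form (V →L[ℂ] V) 1) (x : Spacetime) (b c : Fin 3)
    (h : (1:ℕ) ≤ 3) :
    hodge 1 h J x ![b, c] = ∑ a : Fin 3, (eta a * eps ![a, b, c]) • J x ![a] := by
  unfold hodge
  rw [sum_fn1 (M := V →L[ℂ] V) (fun ν => ((∏ i, eta (ν i)) * eps (Fin.append ν ![b, c]
    ∘ Fin.cast (by omega : (3:ℕ) = 1 + (3 - 1)))) • J x ν)]
  norm_num [Nat.factorial]
  exact Finset.sum_congr rfl fun a _ => by rw [eps_app1']

lemma J_inv (hFJ : ∀ (x : Spacetime) (w : Fin 2 → Fin 3),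
      curv A x w = hodge 1 (Nat.le.step (Nat.le.step Nat.le.refl)) J x w) :
    (∀ y, J y ![0] = -curv A y ![1, 2]) ∧ (∀ y, J y ![1] = -curv A y ![0, 2])
      ∧ (∀ y, J y ![2] = curv A y ![0, 1]) := by
  refine ⟨fun y => ?_, fun y => ?_, fun y => ?_⟩
  · have h := hFJ y ![1, 2]
    rw [hodge1_pair] at h
    simp only [Fin.sum_univ_three, eps_012, eps_112, eps_212, eta_0, eta_1, eta_2] at h
    norm_num at h
    simp [h]
  · have h := hFJ y ![0, 2]
    rw [hodge1_pair] at h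
    simp only [Fin.sum_univ_three, eps_002, eps_102, eps_202, eta_0, eta_1, eta_2] at h
    norm_num at h
    simp [h]
  · have h := hFJ y ![0, 1]
    rw [hodge1_pair] at h
    simp only [Fin.sum_univ_three, eps_001, eps_101, eps_201, eta_0, eta_1, eta_2] at h
    norm_num at h
    simp [h]

end Jinv

/-- **Commutation of boosts with the covariant Klein–Gordon operator under a
Chern–Simons constraint.** Suppose the curvature of the connection `A` satisfies
`F = ⋆J` for a (Lie-algebra-, here operator-)valued 1-form `J`.  Then for any
`V`-valued function `φ` and any Killing vector field `Z` of the Minkowski metric on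
`ℝ^{1+2}`, writing `Z^A φ = D_Z φ` and `□_A = D^μ D_μ`:
`[Z^A, □_A] φ = ι_Z ⋆ D(J ∧ φ) - ι_Z ⋆ (J ∧ Dφ) - ⋆(J ∧ φ ∧ dZ^♭)`. -/
theorem stmt18 {V : Type*} [NormedAddCommGroup V] [NormedSpace ℂ V]
    (A J : Form (V →L[ℂ] V) 1)
    (hA : ∀ w, ContDiff ℝ (⊤ : ℕ∞) fun y => A y w)
    (hJ : ∀ w, ContDiff ℝ (⊤ : ℕ∞) fun y => J y w)
    (hFJ : ∀ (x : Spacetime) (w : Fin 2 → Fin 3),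
      curv A x w = hodge 1 (by omega) J x w)
    (Z : Spacetime → Fin 3 → ℝ)
    (hZsmooth : ∀ μ, ContDiff ℝ (⊤ : ℕ∞) fun y => Z y μ)
    (hZ : IsKilling Z)
    (φ : Spacetime → V) (hφ : ContDiff ℝ (⊤ : ℕ∞) φ) :
    ∀ x : Spacetime,
      covDvec A Z (boxA A φ) x - boxA A (covDvec A Z φ) x =
        iprod (k := 0) Z
            (hodge 2 (by omega)
              (covD A (wedgeA J (fun y (_ : Fin 0 → Fin 3) => φ y)))) x Fin.elim0
          - iprod (k := 0) Z
              (hodge 2 (by omega)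
                (wedgeA J (covD A (fun y (_ : Fin 0 → Fin 3) => φ y)))) x Fin.elim0
          - hodge 3 (by omega)
              (wedge12 (wedgeA J (fun y (_ : Fin 0 → Fin 3) => φ y)) (extd (flat Z)))
              x Fin.elim0 := by
  intro x
  obtain ⟨hJ0, hJ1, hJ2⟩ := J_inv (A := A) (J := J) hFJ
  -- pointwise curvature orientation lemmas
  have h10 : ∀ y : Spacetime, curv A y ![1, 0] = -curv A y ![0, 1] := fun y => curv_swap y 0 1
  have h20 : ∀ y : Spacetime, curv A y ![2, 0] = -curv A y ![0, 2] := fun y => curv_swap y 0 2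
  have h21 : ∀ y : Spacetime, curv A y ![2, 1] = -curv A y ![1, 2] := fun y => curv_swap y 1 2
  -- commutator substitutions for second covariant derivatives
  have hφd : Differentiable ℝ φ := hφ.differentiable (by simp)
  have hcomm : ∀ a b : Fin 3, covd1 A a (covd1 A b φ) x
      = covd1 A b (covd1 A a φ) x + curv A x ![a, b] (φ x) :=
    fun a b => by
      have h := covd1_comm hA hφ x a b
      have := sub_eq_iff_eq_add.mp h
      rw [this]; abel
  have hc10 : covd1 A 1 (covd1 A 0 φ) x
      = covd1 A 0 (covd1 A 1 φ) x + -(curv A x ![0, 1] (φ x)) := by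
    rw [hcomm 1 0, h10]; simp
  have hc20 : covd1 A 2 (covd1 A 0 φ) x
      = covd1 A 0 (covd1 A 2 φ) x + -(curv A x ![0, 2] (φ x)) := by
    rw [hcomm 2 0, h20]; simp
  have hc21 : covd1 A 2 (covd1 A 1 φ) x
      = covd1 A 1 (covd1 A 2 φ) x + -(curv A x ![1, 2] (φ x)) := by
    rw [hcomm 2 1, h21]; simp
  -- Killing facts
  have k10 : fderiv ℝ (fun y => Z y 0) x (Pi.single 1 1)
      = fderiv ℝ (fun y => Z y 1) x (Pi.single 0 1) := by
    have h := hZ x 1 0; rw [eta_0, eta_1] at h; linarith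
  have k20 : fderiv ℝ (fun y => Z y 0) x (Pi.single 2 1)
      = fderiv ℝ (fun y => Z y 2) x (Pi.single 0 1) := by
    have h := hZ x 2 0; rw [eta_0, eta_2] at h; linarith
  have k21 : fderiv ℝ (fun y => Z y 1) x (Pi.single 2 1)
      = -fderiv ℝ (fun y => Z y 2) x (Pi.single 1 1) := by
    have h := hZ x 2 1; rw [eta_1, eta_2] at h; linarith
  have k00 : fderiv ℝ (fun y => Z y 0) x (Pi.single 0 1) = 0 := by
    have h := hZ x 0 0; rw [eta_0] at h; linarith
  have k11 : fderiv ℝ (fun y => Z y 1) x (Pi.single 1 1) = 0 := by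
    have h := hZ x 1 1; rw [eta_1] at h; linarith
  have k22 : fderiv ℝ (fun y => Z y 2) x (Pi.single 2 1) = 0 := by
    have h := hZ x 2 2; rw [eta_2] at h; linarith
  -- rewrite LHS
  rw [LHS_eq hA hZsmooth hZ hφ x]
  -- rewrite RHS structure
  rw [wedgeA_phi (J := J) φ, covD_phi (A := A) (φ := φ)]
  rw [iprod_hodge2 Z (covD A fun y w => J y ![w 0] (φ y)) x,
    iprod_hodge2 Z (wedgeA J fun y w => covd1 A (w 0) φ y) x,
    hodge3_elim (wedge12 (fun y w => J y ![w 0] (φ y)) (extd (flat Z))) x]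
  have hT1c : ∀ a b : Fin 3, covD A (fun y w => J y ![w 0] (φ y)) x ![a, b]
      = covd1 A a (fun y => J y ![b] (φ y)) x - covd1 A b (fun y => J y ![a] (φ y)) x :=
    fun a b => covD_pair (c := fun μ y => J y ![μ] (φ y)) x a b
  have hT2c : ∀ a b : Fin 3, wedgeA J (fun y w => covd1 A (w 0) φ y) x ![a, b]
      = J x ![a] (covd1 A b φ x) - J x ![b] (covd1 A a φ x) :=
    fun a b => wedgeA_pair (c := fun μ y => covd1 A μ φ y) x a b
  simp only [Fin.sum_univ_three]
  simp only [hT1c, hT2c, wedge12_expand, extd_flat hZsmooth]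
  simp only [eps_000, eps_001, eps_002, eps_010, eps_011, eps_012, eps_020, eps_021, eps_022,
    eps_100, eps_101, eps_102, eps_110, eps_111, eps_112, eps_120, eps_121, eps_122,
    eps_200, eps_201, eps_202, eps_210, eps_211, eps_212, eps_220, eps_221, eps_222,
    eta_0, eta_1, eta_2]
  simp only [Matrix.cons_val_zero, Matrix.cons_val_one, Matrix.head_cons]
  simp only [hJ0, hJ1, hJ2, curv_diag, h10, h20, h21,
    ContinuousLinearMap.neg_apply, ContinuousLinearMap.zero_apply,
    covd1_neg, covd1_zero]
  simp only [hc10, hc20, hc21]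
  simp only [k10, k20, k21, k00, k11, k22]
  module
end
end

section
/- On the unit hyperboloid H = {(t,x) ∈ R^{1+2} : t = √(1+|x|²)} parametrized by (y,θ) ↦ (cosh y, sinh y cos θ, sinh y sin θ) with induced measure sinh y dy dθ, every smooth compactly supported function u: H → R satisfies, for y ≥ 1: cosh²y · u(y,θ)² ≤ C ∫₀^∞ cosh y′ (u² + (∂_{y'} u)²)(y′,θ) sinh y′ dy′, for an absolute constant C. -/
open MeasureTheory

/-- **The radial one-dimensional estimate on the unit hyperboloid** (key step in the
hyperboloidal Klainerman–Sobolev inequality): there is an absolute constant `C` such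
that every smooth compactly supported function `u = u(y, θ)` on the unit hyperboloid
(hyperbolic polar coordinates, with induced measure `sinh y dy dθ`) satisfies, for
`y ≥ 1`,
`cosh² y · u(y,θ)² ≤ C ∫₀^∞ cosh y' (u² + (∂_{y'} u)²)(y',θ) sinh y' dy'`. -/
theorem stmt19 :
    ∃ C : ℝ, 0 < C ∧
      ∀ u : ℝ → ℝ → ℝ,
        ContDiff ℝ (⊤ : ℕ∞) (fun p : ℝ × ℝ => u p.1 p.2) →
        HasCompactSupport (fun p : ℝ × ℝ => u p.1 p.2) →
        ∀ y θ : ℝ, 1 ≤ y →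
          Real.cosh y ^ 2 * u y θ ^ 2 ≤
            C * ∫ y' in Set.Ioi (0 : ℝ),
              Real.cosh y' * (u y' θ ^ 2 + (deriv (fun s => u s θ) y') ^ 2) *
                Real.sinh y' := by
  refine ⟨4, by norm_num, ?_⟩
  intro u hu hsupp y θ hy
  set f : ℝ → ℝ := fun s => u s θ with hfdef
  have hf : ContDiff ℝ (⊤ : ℕ∞) f := hu.comp (contDiff_id.prodMk contDiff_const)
  have hfc : Continuous f := hf.continuous
  have hf' : Continuous (deriv f) := hf.continuous_deriv (by simp)
  obtain ⟨r, hr⟩ := hsupp.isBounded.subset_closedBall 0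
  set M : ℝ := max r y with hM
  have hyM : y ≤ M := le_max_right _ _
  have hMpos : (0:ℝ) < M := by
    have : (1:ℝ) ≤ M := le_trans hy hyM
    linarith
  have hfzero : ∀ s, M < s → f s = 0 := by
    intro s hs
    by_contra h
    have hmem : (s, θ) ∈ tsupport (fun p : ℝ × ℝ => u p.1 p.2) :=
      subset_tsupport _ h
    have hball := hr hmem
    rw [Metric.mem_closedBall, Prod.dist_eq] at hball
    have h1 : dist s (0:ℝ) ≤ r := le_trans (le_max_left _ _) hball
    rw [Real.dist_eq, sub_zero] at h1
    have h2 : s ≤ r := le_trans (le_abs_self s) h1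
    have h3 : r ≤ M := le_max_left _ _
    linarith
  have hderivzero : ∀ s, M < s → deriv f s = 0 := by
    intro s hs
    have hev : f =ᶠ[nhds s] (fun _ => 0) := by
      filter_upwards [Ioi_mem_nhds hs] with t ht using hfzero t ht
    rw [hev.deriv_eq]
    simp
  set b : ℝ := M + 1 with hbdef
  have hyb : y ≤ b := by linarith
  set g : ℝ → ℝ := fun s => Real.cosh s ^ 2 * f s ^ 2 with hg
  set G : ℝ → ℝ := fun s =>
    2 * Real.cosh s * Real.sinh s * f s ^ 2 +
      Real.cosh s ^ 2 * (2 * f s * deriv f s) with hG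
  have hderiv : ∀ x : ℝ, HasDerivAt g (G x) x := by
    intro x
    have h1 : HasDerivAt (fun s => Real.cosh s ^ 2) (2 * Real.cosh x * Real.sinh x) x := by
      have := (Real.hasDerivAt_cosh x).fun_pow 2
      simpa [pow_one] using this
    have hfx : HasDerivAt f (deriv f x) x := (hf.differentiable (by simp) x).hasDerivAt
    have h2 : HasDerivAt (fun s => f s ^ 2) (2 * f x * deriv f x) x := by
      simpa [pow_one] using hfx.fun_pow 2
    exact h1.mul h2
  have hGcont : Continuous G := by fun_prop
  have hFTC : ∫ x in y..b, G x = g b - g y :=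
    intervalIntegral.integral_eq_sub_of_hasDerivAt (fun x _ => hderiv x)
      (hGcont.intervalIntegrable y b)
  have hgb : g b = 0 := by
    simp [hg, hfzero b (by linarith)]
  set h0 : ℝ → ℝ := fun s =>
    Real.cosh s * (f s ^ 2 + deriv f s ^ 2) * Real.sinh s with hh0
  have key : ∀ s : ℝ, 1 ≤ s → Real.cosh s ≤ 2 * Real.sinh s := by
    intro s hs
    rw [Real.cosh_eq, Real.sinh_eq]
    have h1 : (2:ℝ) ≤ Real.exp s := by
      have ha := Real.add_one_le_exp (1:ℝ)
      have hb := Real.exp_le_exp.2 hs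
      linarith
    have h2 : Real.exp (-s) ≤ 1/2 := by
      rw [Real.exp_neg]
      have := inv_anti₀ (by norm_num : (0:ℝ) < 2) h1
      simpa using this
    have h3 : 0 < Real.exp (-s) := Real.exp_pos _
    linarith
  have hpt : ∀ s : ℝ, 1 ≤ s → -G s ≤ 4 * h0 s := by
    intro s hs
    have hc := key s hs
    have hsinh : 0 < Real.sinh s := Real.sinh_pos_iff.2 (by linarith)
    have hcosh : 0 < Real.cosh s := Real.cosh_pos s
    have h1 : Real.cosh s ^ 2 ≤ 2 * Real.sinh s * Real.cosh s := by nlinarith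
    have h2 : -(2 * f s * deriv f s) ≤ f s ^ 2 + deriv f s ^ 2 := by
      nlinarith [sq_nonneg (f s + deriv f s)]
    simp only [hG, hh0]
    nlinarith [mul_le_mul_of_nonneg_left h2 (sq_nonneg (Real.cosh s)),
      mul_le_mul_of_nonneg_right h1 (by positivity : (0:ℝ) ≤ f s ^ 2 + deriv f s ^ 2),
      mul_pos hcosh hsinh, sq_nonneg (f s), mul_nonneg (mul_nonneg hcosh.le hsinh.le) (sq_nonneg (f s))]
  have hh0cont : Continuous h0 := by fun_prop
  have hint : IntegrableOn h0 (Set.Ioi (0:ℝ)) := by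
    have hun : Set.Ioc (0:ℝ) M ∪ Set.Ioi M = Set.Ioi 0 := Set.Ioc_union_Ioi_eq_Ioi hMpos.le
    rw [← hun]
    apply IntegrableOn.union
    · exact hh0cont.integrableOn_Ioc
    · have heq : Set.EqOn h0 0 (Set.Ioi M) := fun s hs => by
        simp [hh0, hfzero s hs, hderivzero s hs]
      exact (integrableOn_congr_fun heq measurableSet_Ioi).2 (integrableOn_zero)
  have hnonneg : ∀ s ∈ Set.Ioi (0:ℝ), 0 ≤ h0 s := by
    intro s hs
    have hsinh : 0 ≤ Real.sinh s := (Real.sinh_pos_iff.2 hs).le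
    have hcosh : 0 ≤ Real.cosh s := (Real.cosh_pos s).le
    positivity
  -- chain
  have step1 : g y = ∫ x in y..b, -G x := by
    rw [intervalIntegral.integral_neg, hFTC, hgb]
    ring
  have step2 : ∫ x in y..b, -G x ≤ ∫ x in y..b, 4 * h0 x := by
    apply intervalIntegral.integral_mono_on hyb
    · exact (hGcont.neg.intervalIntegrable y b)
    · exact ((continuous_const.mul hh0cont).intervalIntegrable y b)
    · intro x hx
      exact hpt x (le_trans hy hx.1)
  have step3 : ∫ x in y..b, 4 * h0 x = 4 * ∫ x in Set.Ioc y b, h0 x := by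
    rw [intervalIntegral.integral_of_le hyb, integral_const_mul]
  have step4 : ∫ x in Set.Ioc y b, h0 x ≤ ∫ x in Set.Ioi (0:ℝ), h0 x := by
    apply setIntegral_mono_set hint
    · filter_upwards [self_mem_ae_restrict measurableSet_Ioi] with x hx using hnonneg x hx
    · apply Filter.Eventually.of_forall
      intro x hx
      exact lt_of_le_of_lt (by linarith : (0:ℝ) ≤ y) hx.1
  calc Real.cosh y ^ 2 * f y ^ 2 = g y := rfl
    _ = ∫ x in y..b, -G x := step1
    _ ≤ ∫ x in y..b, 4 * h0 x := step2
    _ = 4 * ∫ x in Set.Ioc y b, h0 x := step3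
    _ ≤ 4 * ∫ x in Set.Ioi (0:ℝ), h0 x := by linarith [step4]
end
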